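/- arXiv:math/0104244 — 13 statements merged into one kernel-verified Lean document; each statement's English description precedes it below -/
import Mathlib

section
/- Let c ∈ ℂ and r > 0, and let w₁, w₂, w₃, w₄, w₅ ∈ ℂ all satisfy |wⱼ − c| = r. Assume w₁ ≠ w₂, w₂ ≠ w₃, w₃ ≠ w₄, w₄ ≠ w₅ and w₅ ≠ w₁, and let w₆ ∈ ℂ with w₆ ≠ w₁. If the multi-ratio M(w₁,w₂,w₃,w₄,w₅,w₆) is a real number, then |w₆ − c| = r, i.e. w₆ lies on the same circle. -/
/-- The multi-ratio of six complex numbers. -/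
noncomputable def multiRatio (w₁ w₂ w₃ w₄ w₅ w₆ : ℂ) : ℂ :=
  ((w₁ - w₂) * (w₃ - w₄) * (w₅ - w₆)) / ((w₂ - w₃) * (w₄ - w₅) * (w₆ - w₁))

/-!
Centre the circle at `0` and let `s = r²`. On the circle `conj a = s / a`, so conjugating the
multi-ratio of `a₁, …, a₅, z` only replaces the factor `(a₅ - z) / (z - a₁)` by
`(s - a₅ z̄) / (a₁ z̄ - s)`, the same Möbius map evaluated at the inverse `s / z̄` of `z` in the
circle. Equating the two and clearing denominators leaves `(a₁ - a₅) (z z̄ - s) = 0`.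
-/

open ComplexConjugate

theorem multiRatio_sub_const (w₁ w₂ w₃ w₄ w₅ w₆ c : ℂ) :
    multiRatio (w₁ - c) (w₂ - c) (w₃ - c) (w₄ - c) (w₅ - c) (w₆ - c) =
      multiRatio w₁ w₂ w₃ w₄ w₅ w₆ := by
  simp only [multiRatio, sub_sub_sub_cancel_right]

theorem Complex.mul_conj_eq_sq_iff_norm_eq {a : ℂ} {r : ℝ} (hr : 0 ≤ r) :
    a * conj a = (r : ℂ) ^ 2 ↔ ‖a‖ = r := by
  rw [Complex.mul_conj']
  norm_cast
  exact pow_left_inj₀ (norm_nonneg a) hr two_ne_zero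

section CircleAtOrigin

variable {s a₁ a₂ a₃ a₄ a₅ z : ℂ}

theorem ne_zero_of_mul_conj_eq {a : ℂ} (hs : s ≠ 0) (ha : a * conj a = s) : a ≠ 0 := by
  rintro rfl
  simp_all

theorem conj_eq_div_of_mul_conj_eq {a : ℂ} (hs : s ≠ 0) (ha : a * conj a = s) :
    conj a = s / a := by
  rw [← ha, mul_div_cancel_left₀ _ (ne_zero_of_mul_conj_eq hs ha)]

theorem conj_multiRatio_of_mul_conj_eq (hs : s ≠ 0)
    (h₁ : a₁ * conj a₁ = s) (h₂ : a₂ * conj a₂ = s) (h₃ : a₃ * conj a₃ = s)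
    (h₄ : a₄ * conj a₄ = s) (h₅ : a₅ * conj a₅ = s) :
    conj (multiRatio a₁ a₂ a₃ a₄ a₅ z) =
      (a₁ - a₂) * (a₃ - a₄) * (s - a₅ * conj z) /
        ((a₂ - a₃) * (a₄ - a₅) * (a₁ * conj z - s)) := by
  simp only [multiRatio, map_div₀, map_mul, map_sub, conj_eq_div_of_mul_conj_eq hs h₁,
    conj_eq_div_of_mul_conj_eq hs h₂, conj_eq_div_of_mul_conj_eq hs h₃,
    conj_eq_div_of_mul_conj_eq hs h₄, conj_eq_div_of_mul_conj_eq hs h₅]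
  have := ne_zero_of_mul_conj_eq hs h₁; have := ne_zero_of_mul_conj_eq hs h₂
  have := ne_zero_of_mul_conj_eq hs h₃; have := ne_zero_of_mul_conj_eq hs h₄
  have := ne_zero_of_mul_conj_eq hs h₅
  field_simp
  ring

theorem mul_conj_eq_of_conj_multiRatio_eq (hs : s ≠ 0)
    (h₁ : a₁ * conj a₁ = s) (h₂ : a₂ * conj a₂ = s) (h₃ : a₃ * conj a₃ = s)
    (h₄ : a₄ * conj a₄ = s) (h₅ : a₅ * conj a₅ = s)
    (h₁₂ : a₁ ≠ a₂) (h₂₃ : a₂ ≠ a₃) (h₃₄ : a₃ ≠ a₄) (h₄₅ : a₄ ≠ a₅) (h₅₁ : a₅ ≠ a₁)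
    (hz₁ : z ≠ a₁) (hM : conj (multiRatio a₁ a₂ a₃ a₄ a₅ z) = multiRatio a₁ a₂ a₃ a₄ a₅ z) :
    z * conj z = s := by
  have hz₁' : a₁ * conj z - s ≠ 0 := by
    rw [← h₁, ← mul_sub, ← map_sub]
    exact mul_ne_zero (ne_zero_of_mul_conj_eq hs h₁) ((map_ne_zero _).2 (sub_ne_zero.2 hz₁))
  rw [conj_multiRatio_of_mul_conj_eq hs h₁ h₂ h₃ h₄ h₅, multiRatio,
    div_eq_div_iff (by simp [sub_ne_zero, h₂₃, h₄₅, hz₁'])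
      (by simp [sub_ne_zero, h₂₃, h₄₅, hz₁])] at hM
  have hfactor :
      (a₁ - a₂) * (a₃ - a₄) * (a₂ - a₃) * (a₄ - a₅) * (a₁ - a₅) * (z * conj z - s) = 0 := by
    linear_combination hM
  refine sub_eq_zero.1 ((mul_eq_zero.1 hfactor).resolve_left ?_)
  simp [sub_ne_zero, h₁₂, h₂₃, h₃₄, h₄₅, h₅₁.symm]

end CircleAtOrigin

/-- If five points on a circle are joined by a sixth point so that the
multi-ratio of the six points is real, then the sixth point lies on the
same circle. -/
theorem multiRatio_real_implies_on_circle
    (c : ℂ) (r : ℝ) (hr : 0 < r)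
    (w₁ w₂ w₃ w₄ w₅ w₆ : ℂ)
    (h₁ : ‖w₁ - c‖ = r)
    (h₂ : ‖w₂ - c‖ = r)
    (h₃ : ‖w₃ - c‖ = r)
    (h₄ : ‖w₄ - c‖ = r)
    (h₅ : ‖w₅ - c‖ = r)
    (h12 : w₁ ≠ w₂) (h23 : w₂ ≠ w₃) (h34 : w₃ ≠ w₄)
    (h45 : w₄ ≠ w₅) (h51 : w₅ ≠ w₁) (h61 : w₆ ≠ w₁)
    (hreal : ∃ t : ℝ, multiRatio w₁ w₂ w₃ w₄ w₅ w₆ = (t : ℂ)) :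
    ‖w₆ - c‖ = r := by
  have hs : ((r : ℂ) ^ 2) ≠ 0 := pow_ne_zero 2 (Complex.ofReal_ne_zero.2 hr.ne')
  have hcircle : ∀ {w : ℂ}, ‖w - c‖ = r → (w - c) * conj (w - c) = (r : ℂ) ^ 2 :=
    (Complex.mul_conj_eq_sq_iff_norm_eq hr.le).2
  have hM : conj (multiRatio (w₁ - c) (w₂ - c) (w₃ - c) (w₄ - c) (w₅ - c) (w₆ - c)) =
      multiRatio (w₁ - c) (w₂ - c) (w₃ - c) (w₄ - c) (w₅ - c) (w₆ - c) := by
    rw [multiRatio_sub_const]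
    exact Complex.conj_eq_iff_real.2 hreal
  refine (Complex.mul_conj_eq_sq_iff_norm_eq hr.le).1 ?_
  exact mul_conj_eq_of_conj_multiRatio_eq hs (hcircle h₁) (hcircle h₂) (hcircle h₃)
    (hcircle h₄) (hcircle h₅) (sub_left_injective.ne h12) (sub_left_injective.ne h23)
    (sub_left_injective.ne h34) (sub_left_injective.ne h45) (sub_left_injective.ne h51)
    (sub_left_injective.ne h61) hM
end

section
/- Let C₁, C₃, C₅ be three pairwise distinct circles in ℂ with centers c₁, c₃, c₅ and radii r₁, r₃, r₅ > 0, all passing through a common point w₀. Let w₂ ∈ C₁ ∩ C₃ with w₂ ≠ w₀, w₄ ∈ C₃ ∩ C₅ with w₄ ≠ w₀, and w₆ ∈ C₅ ∩ C₁ with w₆ ≠ w₀. Let P ∈ ℂ with P ≠ c₁, P ≠ c₃, P ≠ c₅, and let w₁, w₃, w₅ be the inversions of P in C₁, C₃, C₅ respectively. Assume w₂ ≠ w₃, w₄ ≠ w₅ and w₆ ≠ w₁. Then M(w₁,w₂,w₃,w₄,w₅,w₆) = −1. -/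
/-- Inversion (reflection) of a point `P` in the circle of center `c` and radius `r`. -/
noncomputable def circleInversion (c : ℂ) (r : ℝ) (P : ℂ) : ℂ :=
  c + (r : ℂ) ^ 2 * (P - c) / (Complex.normSq (P - c) : ℂ)

/-!
Write `conj` for complex conjugation. For a circle with center `c` through `w₀`, the inversion of
`P` is `c + (w₀ - c) * conj (w₀ - c) / conj (P - c)`, and the second intersection point of two
such circles is the reflection of `w₀` in the line through their centers. Substituting these,
for consecutive points `w₁, w₂, w₃` one finds `(w₁ - w₂) / (w₂ - w₃) = -λ₁ / λ₃` with the weight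
`λ = conj (w₀ - c) / conj (P - c)` of each circle, so the three such ratios making up the
multi-ratio multiply to `(-1)³`.
-/

open ComplexConjugate

theorem circleInversion_eq (c : ℂ) (r : ℝ) (P : ℂ) :
    circleInversion c r P = c + (r : ℂ) ^ 2 / conj (P - c) := by
  rw [circleInversion, ← Complex.mul_conj]
  rcases eq_or_ne (P - c) 0 with h | h
  · simp [h]
  · rw [mul_comm (P - c), mul_div_mul_right _ _ h]

noncomputable def reflectLine (a b z : ℂ) : ℂ :=
  a + conj (z - a) * (b - a) / conj (b - a)

theorem eq_reflectLine_of_norm_sub_eq {c c' w₀ w : ℂ}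
    (h : ‖w - c‖ = ‖w₀ - c‖) (h' : ‖w - c'‖ = ‖w₀ - c'‖) (hw : w ≠ w₀) (hc : c ≠ c') :
    w = reflectLine c c' w₀ := by
  have mul_conj_eq {d : ℂ} (hd : ‖w - d‖ = ‖w₀ - d‖) :
      (w - d) * (conj w - conj d) = (w₀ - d) * (conj w₀ - conj d) := by
    rw [← map_sub, ← map_sub, Complex.mul_conj', Complex.mul_conj', hd]
  have hcc : conj c' - conj c ≠ 0 := sub_ne_zero.mpr fun h => hc (star_injective h).symm
  have key : (w - c) * (conj c' - conj c) = (conj w₀ - conj c) * (c' - c) := by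
    apply mul_left_cancel₀ (sub_ne_zero.mpr hw)
    linear_combination (w - c) * (mul_conj_eq h - mul_conj_eq h') - (c' - c) * mul_conj_eq h
  rw [reflectLine, map_sub, map_sub, ← sub_eq_iff_eq_add', eq_div_iff hcc, key]

theorem circleInversion_sub_reflectLine_mul_eq_neg {c c' w₀ P : ℂ} {r r' : ℝ}
    (h₀ : ‖w₀ - c‖ = r) (h₀' : ‖w₀ - c'‖ = r') (hc : c ≠ c') (hP : P ≠ c) (hP' : P ≠ c') :
    (circleInversion c r P - reflectLine c c' w₀) * (conj (w₀ - c') / conj (P - c'))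
      = -(reflectLine c c' w₀ - circleInversion c' r' P) * (conj (w₀ - c) / conj (P - c)) := by
  have hcc : conj c' - conj c ≠ 0 := sub_ne_zero.mpr fun h => hc (star_injective h).symm
  have hPc : conj P - conj c ≠ 0 := sub_ne_zero.mpr fun h => hP (star_injective h)
  have hPc' : conj P - conj c' ≠ 0 := sub_ne_zero.mpr fun h => hP' (star_injective h)
  rw [circleInversion_eq, circleInversion_eq, ← h₀, ← h₀', ← Complex.mul_conj',
    ← Complex.mul_conj', reflectLine]
  simp only [map_sub]
  field_simp
  ring

theorem circleInversion_sub_mul_eq_neg {c c' w₀ w P : ℂ} {r r' : ℝ}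
    (h₀ : ‖w₀ - c‖ = r) (h₀' : ‖w₀ - c'‖ = r') (h : ‖w - c‖ = r) (h' : ‖w - c'‖ = r')
    (hw : w ≠ w₀) (hP : P ≠ c) (hP' : P ≠ c') :
    (circleInversion c r P - w) * (conj (w₀ - c') / conj (P - c'))
      = -(w - circleInversion c' r' P) * (conj (w₀ - c) / conj (P - c)) := by
  rcases eq_or_ne c c' with rfl | hc
  · obtain rfl : r = r' := h₀.symm.trans h₀'
    ring
  · rw [eq_reflectLine_of_norm_sub_eq (h.trans h₀.symm) (h'.trans h₀'.symm) hw hc]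
    exact circleInversion_sub_reflectLine_mul_eq_neg h₀ h₀' hc hP hP'

theorem multiRatio_eq_neg_one_of_mul_eq_neg_mul {w₁ w₂ w₃ w₄ w₅ w₆ a₁ a₃ a₅ : ℂ}
    (ha₁ : a₁ ≠ 0) (ha₃ : a₃ ≠ 0) (ha₅ : a₅ ≠ 0) (h₂₃ : w₂ ≠ w₃) (h₄₅ : w₄ ≠ w₅) (h₆₁ : w₆ ≠ w₁)
    (h₁ : (w₁ - w₂) * a₃ = -(w₂ - w₃) * a₁) (h₃ : (w₃ - w₄) * a₅ = -(w₄ - w₅) * a₃)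
    (h₅ : (w₅ - w₆) * a₁ = -(w₆ - w₁) * a₅) :
    multiRatio w₁ w₂ w₃ w₄ w₅ w₆ = -1 := by
  have hden : (w₂ - w₃) * (w₄ - w₅) * (w₆ - w₁) ≠ 0 := by
    simp [sub_eq_zero, h₂₃, h₄₅, h₆₁]
  rw [multiRatio, div_eq_iff hden]
  apply mul_right_cancel₀ (mul_ne_zero (mul_ne_zero ha₁ ha₃) ha₅)
  linear_combination congr($h₁ * $h₃ * $h₅)

theorem multiRatio_of_inversions_eq_neg_one_general
    (c₁ c₃ c₅ : ℂ) (r₁ r₃ r₅ : ℝ)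
    (hr₁ : 0 < r₁) (hr₃ : 0 < r₃) (hr₅ : 0 < r₅)
    (w₀ : ℂ)
    (hw₀₁ : ‖w₀ - c₁‖ = r₁)
    (hw₀₃ : ‖w₀ - c₃‖ = r₃)
    (hw₀₅ : ‖w₀ - c₅‖ = r₅)
    (w₂ w₄ w₆ : ℂ)
    (hw₂₁ : ‖w₂ - c₁‖ = r₁) (hw₂₃ : ‖w₂ - c₃‖ = r₃)
    (hw₂₀ : w₂ ≠ w₀)
    (hw₄₃ : ‖w₄ - c₃‖ = r₃) (hw₄₅ : ‖w₄ - c₅‖ = r₅)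
    (hw₄₀ : w₄ ≠ w₀)
    (hw₆₅ : ‖w₆ - c₅‖ = r₅) (hw₆₁ : ‖w₆ - c₁‖ = r₁)
    (hw₆₀ : w₆ ≠ w₀)
    (P : ℂ) (hP₁ : P ≠ c₁) (hP₃ : P ≠ c₃) (hP₅ : P ≠ c₅)
    (w₁ w₃ w₅ : ℂ)
    (hw₁ : w₁ = circleInversion c₁ r₁ P)
    (hw₃ : w₃ = circleInversion c₃ r₃ P)
    (hw₅ : w₅ = circleInversion c₅ r₅ P)
    (h23 : w₂ ≠ w₃) (h45 : w₄ ≠ w₅) (h61 : w₆ ≠ w₁) :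
    multiRatio w₁ w₂ w₃ w₄ w₅ w₆ = -1 := by
  have weight_ne_zero {c : ℂ} {r : ℝ} (hr : 0 < r) (h₀ : ‖w₀ - c‖ = r) (hP : P ≠ c) :
      conj (w₀ - c) / conj (P - c) ≠ 0 :=
    div_ne_zero ((map_ne_zero _).mpr (norm_pos_iff.mp (h₀ ▸ hr)))
      ((map_ne_zero _).mpr (sub_ne_zero.mpr hP))
  subst hw₁ hw₃ hw₅
  exact multiRatio_eq_neg_one_of_mul_eq_neg_mul (weight_ne_zero hr₁ hw₀₁ hP₁)
    (weight_ne_zero hr₃ hw₀₃ hP₃) (weight_ne_zero hr₅ hw₀₅ hP₅) h23 h45 h61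
    (circleInversion_sub_mul_eq_neg hw₀₁ hw₀₃ hw₂₁ hw₂₃ hw₂₀ hP₁ hP₃)
    (circleInversion_sub_mul_eq_neg hw₀₃ hw₀₅ hw₄₃ hw₄₅ hw₄₀ hP₃ hP₅)
    (circleInversion_sub_mul_eq_neg hw₀₅ hw₀₁ hw₆₅ hw₆₁ hw₆₀ hP₅ hP₁)

/-- Three pairwise distinct circles through a common point `w₀`, with pairwise
second intersection points `w₂, w₄, w₆`, and `w₁, w₃, w₅` the inversions of a
point `P` in the three circles: the multi-ratio of `w₁,…,w₆` equals `-1`. -/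
theorem multiRatio_of_inversions_eq_neg_one
    (c₁ c₃ c₅ : ℂ) (r₁ r₃ r₅ : ℝ)
    (hr₁ : 0 < r₁) (hr₃ : 0 < r₃) (hr₅ : 0 < r₅)
    (hne₁₃ : (c₁, r₁) ≠ (c₃, r₃)) (hne₃₅ : (c₃, r₃) ≠ (c₅, r₅))
    (hne₅₁ : (c₅, r₅) ≠ (c₁, r₁))
    (w₀ : ℂ)
    (hw₀₁ : ‖w₀ - c₁‖ = r₁)
    (hw₀₃ : ‖w₀ - c₃‖ = r₃)
    (hw₀₅ : ‖w₀ - c₅‖ = r₅)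
    (w₂ w₄ w₆ : ℂ)
    (hw₂₁ : ‖w₂ - c₁‖ = r₁) (hw₂₃ : ‖w₂ - c₃‖ = r₃)
    (hw₂₀ : w₂ ≠ w₀)
    (hw₄₃ : ‖w₄ - c₃‖ = r₃) (hw₄₅ : ‖w₄ - c₅‖ = r₅)
    (hw₄₀ : w₄ ≠ w₀)
    (hw₆₅ : ‖w₆ - c₅‖ = r₅) (hw₆₁ : ‖w₆ - c₁‖ = r₁)
    (hw₆₀ : w₆ ≠ w₀)
    (P : ℂ) (hP₁ : P ≠ c₁) (hP₃ : P ≠ c₃) (hP₅ : P ≠ c₅)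
    (w₁ w₃ w₅ : ℂ)
    (hw₁ : w₁ = circleInversion c₁ r₁ P)
    (hw₃ : w₃ = circleInversion c₃ r₃ P)
    (hw₅ : w₅ = circleInversion c₅ r₅ P)
    (h23 : w₂ ≠ w₃) (h45 : w₄ ≠ w₅) (h61 : w₆ ≠ w₁) :
    multiRatio w₁ w₂ w₃ w₄ w₅ w₆ = -1 :=
  multiRatio_of_inversions_eq_neg_one_general c₁ c₃ c₅ r₁ r₃ r₅ hr₁ hr₃ hr₅ w₀ hw₀₁ hw₀₃ hw₀₅ w₂ w₄
    w₆ hw₂₁ hw₂₃ hw₂₀ hw₄₃ hw₄₅ hw₄₀ hw₆₅ hw₆₁ hw₆₀ P hP₁ hP₃ hP₅ w₁ w₃ w₅ hw₁ hw₃ hw₅ h23 h45 h61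
end

section
/- Let f₁,f₂,f₃,g₁,g₂,g₃,h₁,h₂,h₃ ∈ ℂ satisfy fᵢ·gᵢ·hᵢ = 1 for i = 1,2,3. Then the zero curvature condition ℒ(f₃,g₃,h₃;μ) · ℒ(f₂,g₂,h₂;μ) · ℒ(f₁,g₁,h₁;μ) = (1+μ)·I holds for every μ ∈ ℂ (I the 3×3 identity matrix) if and only if f₁+f₂+f₃ = 0, g₁+g₂+g₃ = 0, and f₁g₁ = f₃g₂. -/
open Matrix

/-- The (gauge-transformed) transition matrix of the fgh-system. -/
def fghL (f g h μ : ℂ) : Matrix (Fin 3) (Fin 3) ℂ :=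
  !![1, f, 0; 0, 1, g; μ * h, 0, 1]

lemma fghL_key (f₁ f₂ f₃ g₁ g₂ g₃ h₁ h₂ h₃ μ : ℂ) :
    fghL f₃ g₃ h₃ μ * fghL f₂ g₂ h₂ μ * fghL f₁ g₁ h₁ μ =
    !![1 + μ*(f₃*g₂*h₁), f₁+f₂+f₃, f₂*g₁+f₃*g₁+f₃*g₂;
       μ*(g₃*h₂+g₂*h₁+g₃*h₁), 1+μ*(f₁*g₃*h₂), g₁+g₂+g₃;
       μ*(h₁+h₂+h₃), μ*(f₁*h₃+f₁*h₂+f₂*h₃), 1+μ*(f₂*g₁*h₃)] := by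
  simp only [fghL, Matrix.mul_fin_three]
  ext i j
  fin_cases i <;> fin_cases j <;> simp <;> ring

/-- The zero curvature condition on an elementary triangle is equivalent to
the equations of the fgh-system. -/
theorem zero_curvature_iff_fgh
    (f₁ f₂ f₃ g₁ g₂ g₃ h₁ h₂ h₃ : ℂ)
    (h1 : f₁ * g₁ * h₁ = 1) (h2 : f₂ * g₂ * h₂ = 1) (h3 : f₃ * g₃ * h₃ = 1) :
    (∀ μ : ℂ, fghL f₃ g₃ h₃ μ * fghL f₂ g₂ h₂ μ * fghL f₁ g₁ h₁ μ
        = (1 + μ) • (1 : Matrix (Fin 3) (Fin 3) ℂ)) ↔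
      (f₁ + f₂ + f₃ = 0 ∧ g₁ + g₂ + g₃ = 0 ∧ f₁ * g₁ = f₃ * g₂) := by
  have hf1 : f₁ ≠ 0 := by intro h; rw [h] at h1; simp at h1
  have hf2 : f₂ ≠ 0 := by intro h; rw [h] at h2; simp at h2
  have hg1 : g₁ ≠ 0 := by intro h; rw [h] at h1; simp at h1
  have hg2 : g₂ ≠ 0 := by intro h; rw [h] at h2; simp at h2
  constructor
  · intro H
    have H1 := (fghL_key f₁ f₂ f₃ g₁ g₂ g₃ h₁ h₂ h₃ 1).symm.trans (H 1)
    have e01 := congrFun (congrFun H1 0) 1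
    have e12 := congrFun (congrFun H1 1) 2
    have e02 := congrFun (congrFun H1 0) 2
    simp [Matrix.smul_apply, Matrix.one_apply] at e01 e12 e02
    exact ⟨e01, e12, by linear_combination g₁ * e01 - e02⟩
  · rintro ⟨e1, e2, e3⟩ μ
    have m4 : f₃ * g₂ * h₁ = 1 := by linear_combination h1 - h₁ * e3
    have hB : f₁ * g₃ = f₂ * g₂ := by linear_combination f₁ * e2 - e3 - g₂ * e1
    have hC : f₂ * g₁ = f₃ * g₃ := by linear_combination g₁ * e1 - f₃ * e2 - e3
    have m5 : f₁ * g₃ * h₂ = 1 := by linear_combination h2 + h₂ * hB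
    have m6 : f₂ * g₁ * h₃ = 1 := by linear_combination h3 + h₃ * hC
    have d1 : f₂ * h₃ = f₁ * h₁ := by
      apply mul_left_cancel₀ hg1; linear_combination m6 - h1
    have d2 : f₂ * h₂ = f₃ * h₁ := by
      apply mul_left_cancel₀ hg2; linear_combination h2 - m4
    have s10 : g₃ * h₂ + g₂ * h₁ + g₃ * h₁ = 0 := by
      apply mul_left_cancel₀ hf1; linear_combination m5 + f₁ * h₁ * e2 - h1
    have s20 : h₁ + h₂ + h₃ = 0 := by
      apply mul_left_cancel₀ hf2; linear_combination d1 + d2 + h₁ * e1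
    have s21 : f₁ * h₃ + f₁ * h₂ + f₂ * h₃ = 0 := by
      apply mul_left_cancel₀ hf2
      linear_combination f₁ * d1 + f₁ * d2 + f₂ * d1 + f₁ * h₁ * e1
    rw [fghL_key]
    ext i j
    fin_cases i <;> fin_cases j <;>
      simp [Matrix.smul_apply, Matrix.one_apply] <;>
      first
      | linear_combination μ * m4
      | linear_combination μ * m5
      | linear_combination μ * m6
      | exact e1
      | exact e2
      | exact Or.inr s10
      | exact Or.inr s20
      | exact Or.inr s21
      | linear_combination g₁ * e1 - e3
end

section
/- Let f₁,f₂,f₃,g₁,g₂,g₃,h₁,h₂,h₃ ∈ ℂ satisfy fᵢ·gᵢ·hᵢ = 1 for i = 1,2,3, together with f₁+f₂+f₃ = 0, g₁+g₂+g₃ = 0, and f₁g₁ = f₃g₂. Then h₁+h₂+h₃ = 0. -/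
/-- In the fgh-system on an elementary triangle, the sum of the `h`-fields
vanishes. -/
theorem fgh_h_sum_zero
    (f₁ f₂ f₃ g₁ g₂ g₃ h₁ h₂ h₃ : ℂ)
    (h1 : f₁ * g₁ * h₁ = 1) (h2 : f₂ * g₂ * h₂ = 1) (h3 : f₃ * g₃ * h₃ = 1)
    (hf : f₁ + f₂ + f₃ = 0) (hg : g₁ + g₂ + g₃ = 0)
    (hfg : f₁ * g₁ = f₃ * g₂) :
    h₁ + h₂ + h₃ = 0 := by
  have e1 : f₁ * g₁ ≠ 0 := fun h => by simp [h] at h1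
  have e2 : f₂ * g₂ ≠ 0 := fun h => by simp [h] at h2
  have e3 : f₃ * g₃ ≠ 0 := fun h => by simp [h] at h3
  have hf3 : f₃ = -(f₁ + f₂) := by linear_combination hf
  have hg3 : g₃ = -(g₁ + g₂) := by linear_combination hg
  have key : (h₁ + h₂ + h₃) * (f₁ * g₁ * (f₂ * g₂) * (f₃ * g₃)) = 0 := by
    subst hf3 hg3
    linear_combination (f₂ * g₂ * ((f₁ + f₂) * (g₁ + g₂))) * h1 + (f₁ * g₁ * ((f₁ + f₂) * (g₁ + g₂))) * h2 +
      (f₁ * g₁ * (f₂ * g₂)) * h3 + (f₁ * (g₁ + g₂) + f₂ * g₁ + f₂ * g₂ - f₁ * g₂) * hfg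
  rcases mul_eq_zero.mp key with h | h
  · exact h
  · exact absurd h (by simp [mul_ne_zero, e1, e2, e3, mul_ne_zero_iff.mp e1,
      mul_ne_zero_iff.mp e2, mul_ne_zero_iff.mp e3])
end

section
/- Let u', v' ∈ ℂ and u₁,…,u₆, v₁,…,v₆ ∈ ℂ (indices taken modulo 6, so u₇ = u₁, v₇ = v₁) satisfy, for k = 1,2,3, the relations (u₂ₖ₋₁ − u₂ₖ)·(v₂ₖ − v') = (u' − u₂ₖ₋₁)·(v' − v₂ₖ₋₁) and (u₂ₖ₊₁ − u₂ₖ)·(v₂ₖ − v') = (u' − u₂ₖ₊₁)·(v' − v₂ₖ₊₁). Assume u' ≠ uⱼ and v' ≠ vⱼ for j = 1, 3, 5. Then (u₁−u₂)(u₃−u₄)(u₅−u₆) + (u₂−u₃)(u₄−u₅)(u₆−u₁) = 0; that is, the multi-ratio satisfies M(u₁,…,u₆) = −1. -/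
/-- The similarity relations of the fgh-system on the six elementary triangles
surrounding a vertex imply the multi-ratio condition `MR = -1` for the six
surrounding values of `u`. -/
theorem fgh_hexagon_multiRatio
    (u' v' u₁ u₂ u₃ u₄ u₅ u₆ v₁ v₂ v₃ v₄ v₅ v₆ : ℂ)
    (h1 : (u₁ - u₂) * (v₂ - v') = (u' - u₁) * (v' - v₁))
    (h2 : (u₃ - u₂) * (v₂ - v') = (u' - u₃) * (v' - v₃))
    (h3 : (u₃ - u₄) * (v₄ - v') = (u' - u₃) * (v' - v₃))
    (h4 : (u₅ - u₄) * (v₄ - v') = (u' - u₅) * (v' - v₅))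
    (h5 : (u₅ - u₆) * (v₆ - v') = (u' - u₅) * (v' - v₅))
    (h6 : (u₁ - u₆) * (v₆ - v') = (u' - u₁) * (v' - v₁))
    (hu1 : u' ≠ u₁) (hu3 : u' ≠ u₃) (hu5 : u' ≠ u₅)
    (hv1 : v' ≠ v₁) (hv3 : v' ≠ v₃) (hv5 : v' ≠ v₅) :
    (u₁ - u₂) * (u₃ - u₄) * (u₅ - u₆)
      + (u₂ - u₃) * (u₄ - u₅) * (u₆ - u₁) = 0 := by
  have a1 : (u' - u₁) * (v' - v₁) ≠ 0 :=
    mul_ne_zero (sub_ne_zero.mpr hu1) (sub_ne_zero.mpr hv1)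
  have a3 : (u' - u₃) * (v' - v₃) ≠ 0 :=
    mul_ne_zero (sub_ne_zero.mpr hu3) (sub_ne_zero.mpr hv3)
  have a5 : (u' - u₅) * (v' - v₅) ≠ 0 :=
    mul_ne_zero (sub_ne_zero.mpr hu5) (sub_ne_zero.mpr hv5)
  have w2 : v₂ - v' ≠ 0 := fun h => a1 (by rw [← h1, h, mul_zero])
  have w4 : v₄ - v' ≠ 0 := fun h => a3 (by rw [← h3, h, mul_zero])
  have w6 : v₆ - v' ≠ 0 := fun h => a5 (by rw [← h5, h, mul_zero])
  have key : ((u₁ - u₂) * (u₃ - u₄) * (u₅ - u₆)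
      + (u₂ - u₃) * (u₄ - u₅) * (u₆ - u₁)) * ((v₂ - v') * (v₄ - v') * (v₆ - v')) = 0 := by
    linear_combination ((u₃ - u₄) * (v₄ - v') * (u₅ - u₆) * (v₆ - v')) * h1
      + ((u' - u₁) * (v' - v₁) * (u₅ - u₆) * (v₆ - v')) * h3
      + ((u' - u₁) * (v' - v₁) * ((u' - u₃) * (v' - v₃))) * h5
      - ((u₅ - u₄) * (v₄ - v') * (u₁ - u₆) * (v₆ - v')) * h2
      - ((u' - u₃) * (v' - v₃) * (u₁ - u₆) * (v₆ - v')) * h4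
      - ((u' - u₃) * (v' - v₃) * ((u' - u₅) * (v' - v₅))) * h6
  exact (mul_eq_zero.mp key).resolve_right
    (mul_ne_zero (mul_ne_zero w2 w4) w6)
end

section
/- Let u : ℤ² → ℂ be such that u(k+1,ℓ) ≠ u(k,ℓ), u(k,ℓ+1) ≠ u(k,ℓ) and u(k+1,ℓ+1) ≠ u(k,ℓ) for all (k,ℓ) ∈ ℤ² (nonzero differences along all lattice edges), and such that at every vertex (k,ℓ) the hexagon condition M(u(k+1,ℓ), u(k+1,ℓ+1), u(k,ℓ+1), u(k−1,ℓ), u(k−1,ℓ−1), u(k,ℓ−1)) = −1 holds. Then for every p, q ∈ ℂ there exists exactly one map v : ℤ² → ℂ with v(0,0) = p and v(1,0) = q such that relations (A) and (B) hold at every (k,ℓ) ∈ ℤ². Moreover, if p ≠ q, then v has nonzero differences along all lattice edges and v itself satisfies the hexagon condition M(v(k+1,ℓ), v(k+1,ℓ+1), v(k,ℓ+1), v(k−1,ℓ), v(k−1,ℓ−1), v(k,ℓ−1)) = −1 at every vertex. -/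
/-- The hexagon condition `MR = -1` at every vertex of the triangular lattice,
modeled on `ℤ²`. -/
def HexagonCondition (u : ℤ → ℤ → ℂ) : Prop :=
  ∀ k l : ℤ, multiRatio (u (k+1) l) (u (k+1) (l+1)) (u k (l+1))
      (u (k-1) l) (u (k-1) (l-1)) (u k (l-1)) = -1

/-- Nonzero differences along all edges of the triangular lattice. -/
def EdgesNondegenerate (u : ℤ → ℤ → ℂ) : Prop :=
  ∀ k l : ℤ, u (k+1) l ≠ u k l ∧ u k (l+1) ≠ u k l ∧ u (k+1) (l+1) ≠ u k l

/-- The fgh-system in potential form: relations (A) and (B) on every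
elementary cell. -/
def FghRelations (u v : ℤ → ℤ → ℂ) : Prop :=
  ∀ k l : ℤ,
    (u (k+1) l - u k l) * (v k l - v (k+1) (l+1))
      = (u (k+1) (l+1) - u (k+1) l) * (v (k+1) (l+1) - v (k+1) l) ∧
    (u (k+1) (l+1) - u k (l+1)) * (v k (l+1) - v k l)
      = (u k l - u (k+1) (l+1)) * (v k l - v (k+1) (l+1))

/-!
Relations (A) and (B) say that on each triangle of the lattice the increments of `v` along the
horizontal and vertical edges are the diagonal increment `x k l = v (k+1) (l+1) - v k l` times
ratios of increments of `u`. Compatibility on the edges shared by two triangles forces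
`x (k+1) l = f k l * x k l` and `x k (l+1) = g k l * x k l` with explicit nonzero factors `f`, `g`,
and the hexagon condition for `u` is exactly the flatness `f k (l+1) * g k l = g (k+1) l * f k l`.
So `x` is determined by `x 0 0`, which `v 1 0 - v 0 0` fixes, and `v` is recovered by summing
a closed discrete 1-form. When `p ≠ q`, `x` never vanishes, hence neither does any edge increment
of `v`, and substituting the triangle relations shows that the multi-ratio of `v` at a vertex is
the reciprocal of that of `u`.
-/

section LatticePotential

variable {G X : Type*} [Group G] [MulAction G X]

@[to_additive]
theorem Int.exists_smul_recursion (t : ℤ → G) (x₀ : X) :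
    ∃ φ : ℤ → X, φ 0 = x₀ ∧ ∀ n, φ (n + 1) = t n • φ n := by
  let φ : ℤ → X := fun n => Int.inductionOn' (motive := fun _ => X) n 0 x₀
    (fun k _ y => t k • y) (fun k _ y => (t (k - 1))⁻¹ • y)
  refine ⟨φ, Int.inductionOn'_self, fun n => ?_⟩
  rcases le_or_gt 0 n with hn | hn
  · exact Int.inductionOn'_add_one hn
  · have h : φ (n + 1 - 1) = (t (n + 1 - 1))⁻¹ • φ (n + 1) :=
      Int.inductionOn'_sub_one (by omega)
    rw [add_sub_cancel_right] at h
    rw [h, smul_inv_smul]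

@[to_additive]
theorem Int.eq_of_smul_recursion {t : ℤ → G} {φ ψ : ℤ → X} (h0 : φ 0 = ψ 0)
    (hφ : ∀ n, φ (n + 1) = t n • φ n) (hψ : ∀ n, ψ (n + 1) = t n • ψ n) :
    φ = ψ := by
  funext n
  induction n using Int.induction_on with
  | zero => exact h0
  | succ n ih => rw [hφ, hψ, ih]
  | pred n ih =>
    rw [← smul_left_cancel_iff (t (-n - 1)), ← hφ, ← hψ, sub_add_cancel, ih]

@[to_additive]
def IsSmulPotential (f g : ℤ → ℤ → G) (φ : ℤ → ℤ → X) : Prop :=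
  ∀ k l, φ (k + 1) l = f k l • φ k l ∧ φ k (l + 1) = g k l • φ k l

variable {f g : ℤ → ℤ → G}

@[to_additive]
theorem exists_isSmulPotential (hfg : ∀ k l, f k (l + 1) * g k l = g (k + 1) l * f k l)
    (x₀ : X) : ∃ φ : ℤ → ℤ → X, φ 0 0 = x₀ ∧ IsSmulPotential f g φ := by
  obtain ⟨row, hrow0, hrow⟩ := Int.exists_smul_recursion (fun k => f k 0) x₀
  choose φ hφ0 hφ using fun k => Int.exists_smul_recursion (g k) (row k)
  refine ⟨φ, (hφ0 0).trans hrow0, fun k l => ⟨?_, hφ k l⟩⟩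
  -- both sides of the claim solve the recursion along the column `k + 1`, by flatness
  refine congrFun (Int.eq_of_smul_recursion (t := g (k + 1)) (ψ := fun l => f k l • φ k l) ?_
    (hφ (k + 1)) fun l => ?_) l
  · rw [hφ0, hφ0, hrow]
  · rw [hφ, smul_smul, hfg, mul_smul]

@[to_additive]
theorem IsSmulPotential.eq {φ ψ : ℤ → ℤ → X} (hφ : IsSmulPotential f g φ)
    (hψ : IsSmulPotential f g ψ) (h0 : φ 0 0 = ψ 0 0) : φ = ψ := by
  have hrow : (φ · 0) = (ψ · 0) :=
    Int.eq_of_smul_recursion h0 (fun k => (hφ k 0).1) (fun k => (hψ k 0).1)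
  funext k
  exact Int.eq_of_smul_recursion (congrFun hrow k) (fun l => (hφ k l).2) (fun l => (hψ k l).2)

theorem IsSmulPotential.smul_right {φ : ℤ → ℤ → G} (hφ : IsSmulPotential f g φ) (x : X) :
    IsSmulPotential f g (fun k l => φ k l • x) := fun k l => by
  dsimp only
  rw [(hφ k l).1, (hφ k l).2, smul_assoc, smul_assoc]
  exact ⟨rfl, rfl⟩

end LatticePotential

section Lattice

variable {u w x : ℤ → ℤ → ℂ}

def rightDiff (w : ℤ → ℤ → ℂ) (k l : ℤ) : ℂ := w (k + 1) l - w k l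

def upDiff (w : ℤ → ℤ → ℂ) (k l : ℤ) : ℂ := w k (l + 1) - w k l

def diagDiff (w : ℤ → ℤ → ℂ) (k l : ℤ) : ℂ := w (k + 1) (l + 1) - w k l

theorem EdgesNondegenerate.rightDiff_ne_zero (hu : EdgesNondegenerate u) (k l : ℤ) :
    rightDiff u k l ≠ 0 :=
  sub_ne_zero.2 (hu k l).1

theorem EdgesNondegenerate.upDiff_ne_zero (hu : EdgesNondegenerate u) (k l : ℤ) :
    upDiff u k l ≠ 0 :=
  sub_ne_zero.2 (hu k l).2.1

theorem EdgesNondegenerate.diagDiff_ne_zero (hu : EdgesNondegenerate u) (k l : ℤ) :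
    diagDiff u k l ≠ 0 :=
  sub_ne_zero.2 (hu k l).2.2

theorem multiRatio_hexagon_eq_neg_div (w : ℤ → ℤ → ℂ) (k l : ℤ) :
    multiRatio (w (k + 2) (l + 1)) (w (k + 2) (l + 2)) (w (k + 1) (l + 2))
        (w k (l + 1)) (w k l) (w (k + 1) l) =
      -(upDiff w (k + 2) (l + 1) * diagDiff w k (l + 1) * rightDiff w k l /
        (rightDiff w (k + 1) (l + 2) * upDiff w k l * diagDiff w (k + 1) l)) := by
  rw [multiRatio, ← div_neg]
  congr 1 <;> simp only [rightDiff, upDiff, diagDiff] <;> ring_nf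

theorem hexagonCondition_iff (hw : EdgesNondegenerate w) :
    HexagonCondition w ↔ ∀ k l,
      upDiff w (k + 2) (l + 1) * diagDiff w k (l + 1) * rightDiff w k l =
        rightDiff w (k + 1) (l + 2) * upDiff w k l * diagDiff w (k + 1) l := by
  have hQ : ∀ k l, rightDiff w (k + 1) (l + 2) * upDiff w k l * diagDiff w (k + 1) l ≠ 0 :=
    fun k l => mul_ne_zero (mul_ne_zero (hw.rightDiff_ne_zero _ _) (hw.upDiff_ne_zero _ _))
      (hw.diagDiff_ne_zero _ _)
  simp_rw [← div_eq_one_iff_eq (hQ _ _), ← neg_inj (b := (1 : ℂ)),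
    ← multiRatio_hexagon_eq_neg_div]
  constructor
  · intro h k l
    simpa [add_assoc, one_add_one_eq_two] using h (k + 1) (l + 1)
  · intro h k l
    have := h (k - 1) (l - 1)
    rwa [show k - 1 + 2 = k + 1 by ring, show l - 1 + 2 = l + 1 by ring, sub_add_cancel,
      sub_add_cancel] at this

theorem fghRelations_iff : FghRelations u w ↔ ∀ k l,
    upDiff u (k + 1) l * rightDiff w k l = diagDiff u k l * diagDiff w k l ∧
      rightDiff u k (l + 1) * upDiff w k l = diagDiff u k l * diagDiff w k l := by
  refine forall₂_congr fun k l => and_congr ?_ ?_ <;>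
    simp only [rightDiff, upDiff, diagDiff] <;> constructor <;> intro h <;> linear_combination h

theorem FghRelations.mul_upDiff_succ (hw : FghRelations u w) (k l : ℤ) :
    upDiff u (k + 1) l * upDiff w (k + 1) l = -(rightDiff u k l * diagDiff w k l) := by
  simp only [rightDiff, upDiff, diagDiff]
  linear_combination -(hw k l).1

theorem FghRelations.mul_rightDiff_succ (hw : FghRelations u w) (k l : ℤ) :
    rightDiff u k (l + 1) * rightDiff w k (l + 1) = -(upDiff u k l * diagDiff w k l) := by
  simp only [rightDiff, upDiff, diagDiff]
  linear_combination -(hw k l).2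

theorem FghRelations.mul_diagDiff_succ_left (hw : FghRelations u w) (k l : ℤ) :
    diagDiff u (k + 1) l * upDiff u (k + 1) l * diagDiff w (k + 1) l =
      -(rightDiff u (k + 1) (l + 1) * rightDiff u k l * diagDiff w k l) := by
  linear_combination rightDiff u (k + 1) (l + 1) * hw.mul_upDiff_succ k l
    - upDiff u (k + 1) l * (fghRelations_iff.1 hw (k + 1) l).2

theorem FghRelations.mul_diagDiff_succ_right (hw : FghRelations u w) (k l : ℤ) :
    diagDiff u k (l + 1) * rightDiff u k (l + 1) * diagDiff w k (l + 1) =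
      -(upDiff u (k + 1) (l + 1) * upDiff u k l * diagDiff w k l) := by
  linear_combination upDiff u (k + 1) (l + 1) * hw.mul_rightDiff_succ k l
    - rightDiff u k (l + 1) * (fghRelations_iff.1 hw k (l + 1)).1

/-- Along horizontal (resp. vertical) steps, the diagonal increments of every solution of the
fgh-system are multiplied by `rowFactor` (resp. `colFactor`). -/
noncomputable def rowFactor (hu : EdgesNondegenerate u) (k l : ℤ) : ℂˣ :=
  Units.mk0 (-(rightDiff u (k + 1) (l + 1) * rightDiff u k l) /
      (diagDiff u (k + 1) l * upDiff u (k + 1) l)) <|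
    div_ne_zero (neg_ne_zero.2 (mul_ne_zero (hu.rightDiff_ne_zero _ _) (hu.rightDiff_ne_zero _ _)))
      (mul_ne_zero (hu.diagDiff_ne_zero _ _) (hu.upDiff_ne_zero _ _))

noncomputable def colFactor (hu : EdgesNondegenerate u) (k l : ℤ) : ℂˣ :=
  Units.mk0 (-(upDiff u (k + 1) (l + 1) * upDiff u k l) /
      (diagDiff u k (l + 1) * rightDiff u k (l + 1))) <|
    div_ne_zero (neg_ne_zero.2 (mul_ne_zero (hu.upDiff_ne_zero _ _) (hu.upDiff_ne_zero _ _)))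
      (mul_ne_zero (hu.diagDiff_ne_zero _ _) (hu.rightDiff_ne_zero _ _))

theorem rowFactor_mul_colFactor (hu : EdgesNondegenerate u) (hhex : HexagonCondition u)
    (k l : ℤ) :
    rowFactor hu k (l + 1) * colFactor hu k l = colFactor hu (k + 1) l * rowFactor hu k l := by
  have hex := (hexagonCondition_iff hu).1 hhex k l
  ext
  simp only [Units.val_mul, rowFactor, colFactor, Units.val_mk0]
  rw [show l + 1 + 1 = l + 2 by ring, show k + 1 + 1 = k + 2 by ring]
  field_simp [hu.rightDiff_ne_zero, hu.upDiff_ne_zero, hu.diagDiff_ne_zero]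
  linear_combination -hex

theorem FghRelations.isSmulPotential_diagDiff (hu : EdgesNondegenerate u)
    (hw : FghRelations u w) : IsSmulPotential (rowFactor hu) (colFactor hu) (diagDiff w) :=
  fun k l => by
  simp only [Units.smul_def, rowFactor, colFactor, Units.val_mk0, smul_eq_mul, div_mul_eq_mul_div]
  constructor
  · rw [eq_div_iff (mul_ne_zero (hu.diagDiff_ne_zero _ _) (hu.upDiff_ne_zero _ _))]
    linear_combination hw.mul_diagDiff_succ_left k l
  · rw [eq_div_iff (mul_ne_zero (hu.diagDiff_ne_zero _ _) (hu.rightDiff_ne_zero _ _))]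
    linear_combination hw.mul_diagDiff_succ_right k l

/-- The horizontal and vertical increments of a solution with diagonal increments `x`,
read off from (A) and (B). -/
noncomputable def rightIncr (u x : ℤ → ℤ → ℂ) (k l : ℤ) : ℂ :=
  diagDiff u k l * x k l / upDiff u (k + 1) l

noncomputable def upIncr (u x : ℤ → ℤ → ℂ) (k l : ℤ) : ℂ :=
  diagDiff u k l * x k l / rightDiff u k (l + 1)

theorem FghRelations.isVAddPotential (hu : EdgesNondegenerate u) (hw : FghRelations u w) :
    IsVAddPotential (rightIncr u (diagDiff w)) (upIncr u (diagDiff w)) w := fun k l => by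
  obtain ⟨hright, hup⟩ := fghRelations_iff.1 hw k l
  constructor
  · rw [vadd_eq_add, rightIncr, ← hright, mul_div_cancel_left₀ _ (hu.upDiff_ne_zero _ _),
      rightDiff, sub_add_cancel]
  · rw [vadd_eq_add, upIncr, ← hup, mul_div_cancel_left₀ _ (hu.rightDiff_ne_zero _ _),
      upDiff, sub_add_cancel]

theorem FghRelations.eq (hu : EdgesNondegenerate u) {w' : ℤ → ℤ → ℂ}
    (hw : FghRelations u w) (hw' : FghRelations u w') (h0 : w 0 0 = w' 0 0)
    (h1 : w 1 0 = w' 1 0) : w = w' := by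
  have hX : diagDiff w = diagDiff w' := by
    refine (hw.isSmulPotential_diagDiff hu).eq (hw'.isSmulPotential_diagDiff hu) ?_
    refine mul_left_cancel₀ (hu.diagDiff_ne_zero 0 0) ?_
    rw [← (fghRelations_iff.1 hw 0 0).1, ← (fghRelations_iff.1 hw' 0 0).1, rightDiff, rightDiff,
      zero_add, h0, h1]
  exact (hw.isVAddPotential hu).eq (hX ▸ hw'.isVAddPotential hu) h0

theorem rightIncr_add_upIncr_succ (hu : EdgesNondegenerate u)
    (hx : IsSmulPotential (rowFactor hu) (colFactor hu) x) (k l : ℤ) :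
    rightIncr u x k l + upIncr u x (k + 1) l = x k l := by
  rw [rightIncr, upIncr, (hx k l).1, Units.smul_def, rowFactor, Units.val_mk0, smul_eq_mul]
  field_simp [hu.rightDiff_ne_zero, hu.upDiff_ne_zero, hu.diagDiff_ne_zero]
  simp only [rightDiff, upDiff, diagDiff]
  ring

theorem upIncr_add_rightIncr_succ (hu : EdgesNondegenerate u)
    (hx : IsSmulPotential (rowFactor hu) (colFactor hu) x) (k l : ℤ) :
    upIncr u x k l + rightIncr u x k (l + 1) = x k l := by
  rw [rightIncr, upIncr, (hx k l).2, Units.smul_def, colFactor, Units.val_mk0, smul_eq_mul]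
  field_simp [hu.rightDiff_ne_zero, hu.upDiff_ne_zero, hu.diagDiff_ne_zero]
  simp only [rightDiff, upDiff, diagDiff]
  ring

theorem exists_fghRelations (hu : EdgesNondegenerate u) (hhex : HexagonCondition u) (p q : ℂ) :
    ∃ v, v 0 0 = p ∧ v 1 0 = q ∧ FghRelations u v ∧
      (p ≠ q → ∀ k l, diagDiff v k l ≠ 0) := by
  obtain ⟨Φ, hΦ0, hΦ⟩ := exists_isSmulPotential (rowFactor_mul_colFactor hu hhex) (1 : ℂˣ)
  set x₀ := (q - p) * upDiff u 1 0 / diagDiff u 0 0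
  have hx := hΦ.smul_right x₀
  set x : ℤ → ℤ → ℂ := fun k l => Φ k l • x₀
  obtain ⟨v, hv0, hv⟩ := exists_isVAddPotential (f := rightIncr u x) (g := upIncr u x)
    (fun k l => by rw [add_comm, upIncr_add_rightIncr_succ hu hx,
      add_comm, rightIncr_add_upIncr_succ hu hx]) p
  have hright : ∀ k l, rightDiff v k l = rightIncr u x k l := fun k l => by
    rw [rightDiff, (hv k l).1, vadd_eq_add, add_sub_cancel_right]
  have hup : ∀ k l, upDiff v k l = upIncr u x k l := fun k l => by
    rw [upDiff, (hv k l).2, vadd_eq_add, add_sub_cancel_right]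
  have hdiag : ∀ k l, diagDiff v k l = x k l := fun k l => by
    rw [← rightIncr_add_upIncr_succ hu hx, ← hright, ← hup, rightDiff, upDiff, diagDiff]
    ring
  refine ⟨v, hv0, ?_, fghRelations_iff.2 fun k l => ⟨?_, ?_⟩, fun hpq k l => ?_⟩
  · have h := hright 0 0
    simp only [rightDiff, rightIncr, zero_add, hv0, x, hΦ0, one_smul, x₀] at h
    field_simp [hu.upDiff_ne_zero, hu.diagDiff_ne_zero] at h
    linear_combination h
  · rw [hright, hdiag, rightIncr, mul_div_cancel₀ _ (hu.upDiff_ne_zero _ _)]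
  · rw [hup, hdiag, upIncr, mul_div_cancel₀ _ (hu.rightDiff_ne_zero _ _)]
  · rw [hdiag]
    exact (smul_ne_zero_iff_ne _).2 (div_ne_zero
      (mul_ne_zero (sub_ne_zero.2 hpq.symm) (hu.upDiff_ne_zero _ _)) (hu.diagDiff_ne_zero _ _))

theorem FghRelations.edgesNondegenerate (hu : EdgesNondegenerate u) (hw : FghRelations u w)
    (hX : ∀ k l, diagDiff w k l ≠ 0) : EdgesNondegenerate w := fun k l => by
  have hdX := mul_ne_zero (hu.diagDiff_ne_zero k l) (hX k l)
  obtain ⟨hright, hup⟩ := fghRelations_iff.1 hw k l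
  exact ⟨sub_ne_zero.1 (right_ne_zero_of_mul (hright ▸ hdX)),
    sub_ne_zero.1 (right_ne_zero_of_mul (hup ▸ hdX)), sub_ne_zero.1 (hX k l)⟩

theorem FghRelations.hexagonCondition (hu : EdgesNondegenerate u) (hhex : HexagonCondition u)
    (hw : FghRelations u w) (hwnd : EdgesNondegenerate w) : HexagonCondition w := by
  rw [hexagonCondition_iff hwnd]
  intro k l
  have hex := (hexagonCondition_iff hu).1 hhex k l
  have h₁ := hw.mul_upDiff_succ (k + 1) (l + 1)
  have h₂ := hw.mul_rightDiff_succ (k + 1) (l + 1)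
  rw [show k + 1 + 1 = k + 2 by ring] at h₁
  rw [show l + 1 + 1 = l + 2 by ring] at h₂
  obtain ⟨h₃, h₄⟩ := fghRelations_iff.1 hw k l
  have h₅ := hw.mul_diagDiff_succ_left k l
  have h₆ := hw.mul_diagDiff_succ_right k l
  -- after clearing the `u`-denominators, the triangle relations turn the identity for `w`
  -- into the one for `u`
  refine mul_left_cancel₀ (a := upDiff u (k + 2) (l + 1) * upDiff u (k + 1) l *
    rightDiff u (k + 1) (l + 2) * rightDiff u k (l + 1) * diagDiff u k (l + 1) *
    diagDiff u (k + 1) l)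
    (by simp [hu.rightDiff_ne_zero, hu.upDiff_ne_zero, hu.diagDiff_ne_zero]) ?_
  calc _ = (upDiff u (k + 2) (l + 1) * upDiff w (k + 2) (l + 1)) *
        (upDiff u (k + 1) l * rightDiff w k l) *
        (diagDiff u k (l + 1) * rightDiff u k (l + 1) * diagDiff w k (l + 1)) *
        (rightDiff u (k + 1) (l + 2) * diagDiff u (k + 1) l) := by ring
    _ = -(rightDiff u (k + 1) (l + 1) * diagDiff w (k + 1) (l + 1)) *
        (diagDiff u k l * diagDiff w k l) *
        -(upDiff u (k + 1) (l + 1) * upDiff u k l * diagDiff w k l) *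
        (rightDiff u (k + 1) (l + 2) * diagDiff u (k + 1) l) := by rw [h₁, h₃, h₆]
    _ = -(upDiff u (k + 1) (l + 1) * diagDiff w (k + 1) (l + 1)) *
        (diagDiff u k l * diagDiff w k l) *
        -(rightDiff u (k + 1) (l + 1) * rightDiff u k l * diagDiff w k l) *
        (upDiff u (k + 2) (l + 1) * diagDiff u k (l + 1)) := by
      linear_combination -(rightDiff u (k + 1) (l + 1) * upDiff u (k + 1) (l + 1) *
        diagDiff w (k + 1) (l + 1) * diagDiff u k l * diagDiff w k l ^ 2) * hex
    _ = (rightDiff u (k + 1) (l + 2) * rightDiff w (k + 1) (l + 2)) *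
        (rightDiff u k (l + 1) * upDiff w k l) *
        (diagDiff u (k + 1) l * upDiff u (k + 1) l * diagDiff w (k + 1) l) *
        (upDiff u (k + 2) (l + 1) * diagDiff u k (l + 1)) := by rw [h₂, h₄, h₅]
    _ = _ := by ring

end Lattice

/-- Given a nondegenerate lattice `u` satisfying the hexagon condition
`MR = -1`, for any prescribed values at `(0,0)` and `(1,0)` there is exactly
one companion lattice `v`; and if the two prescribed values differ, `v` is
again nondegenerate and satisfies the hexagon condition. -/
theorem fgh_companion_lattice
    (u : ℤ → ℤ → ℂ)
    (hu : EdgesNondegenerate u)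
    (hhex : HexagonCondition u) :
    ∀ p q : ℂ,
      (∃! v : ℤ → ℤ → ℂ, v 0 0 = p ∧ v 1 0 = q ∧ FghRelations u v) ∧
      (p ≠ q → ∀ v : ℤ → ℤ → ℂ,
        (v 0 0 = p ∧ v 1 0 = q ∧ FghRelations u v) →
          EdgesNondegenerate v ∧ HexagonCondition v) := by
  intro p q
  obtain ⟨v, hv0, hv1, hv, hdiag⟩ := exists_fghRelations hu hhex p q
  have huniq : ∀ w, w 0 0 = p ∧ w 1 0 = q ∧ FghRelations u w → w = v :=
    fun w ⟨hw0, hw1, hw⟩ => hw.eq hu hv (hw0.trans hv0.symm) (hw1.trans hv1.symm)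
  refine ⟨⟨v, ⟨hv0, hv1, hv⟩, huniq⟩, fun hpq w hw => ?_⟩
  obtain rfl := huniq w hw
  have hvnd := hv.edgesNondegenerate hu (hdiag hpq)
  exact ⟨hvnd, hv.hexagonCondition hu hhex hvnd⟩
end

section
/- Let u₁,u₂,u₃,v₁,v₂,v₃ ∈ ℂ satisfy the elementary-triangle relation (u₂−u₁)·(v₁−v₃) = (u₃−u₂)·(v₃−v₂), and assume that all six differences u₂−u₁, u₃−u₂, u₁−u₃, v₂−v₁, v₃−v₂, v₁−v₃ are nonzero. Then 1/((u₂−u₁)(v₂−v₁)) + 1/((u₃−u₂)(v₃−v₂)) + 1/((u₁−u₃)(v₁−v₃)) = 0. -/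
/-- The third field of the fgh-system, defined on edges by the reciprocal of
the product of the `u`- and `v`-differences, is closed around an elementary
triangle. -/
theorem fgh_third_field_closed
    (u₁ u₂ u₃ v₁ v₂ v₃ : ℂ)
    (h : (u₂ - u₁) * (v₁ - v₃) = (u₃ - u₂) * (v₃ - v₂))
    (hu21 : u₂ - u₁ ≠ 0) (hu32 : u₃ - u₂ ≠ 0) (hu13 : u₁ - u₃ ≠ 0)
    (hv21 : v₂ - v₁ ≠ 0) (hv32 : v₃ - v₂ ≠ 0) (hv13 : v₁ - v₃ ≠ 0) :
    1 / ((u₂ - u₁) * (v₂ - v₁)) + 1 / ((u₃ - u₂) * (v₃ - v₂))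
      + 1 / ((u₁ - u₃) * (v₁ - v₃)) = 0 := by
  field_simp
  linear_combination ((u₂ - u₁) * (v₃ - v₂) + (u₂ - u₁) * (v₁ - v₃)
    + (u₃ - u₂) * (v₁ - v₃)) * h
end

section
/- Let u', v' ∈ ℂ and u₁,…,u₆, v₁,…,v₆ ∈ ℂ (indices taken modulo 6, so u₀ = u₆, u₇ = u₁, v₇ = v₁) satisfy, for k = 1,2,3, the relations (u₂ₖ₋₁ − u₂ₖ)·(v₂ₖ − v') = (u' − u₂ₖ₋₁)·(v' − v₂ₖ₋₁) and (u₂ₖ₊₁ − u₂ₖ)·(v₂ₖ − v') = (u' − u₂ₖ₊₁)·(v' − v₂ₖ₊₁). Assume further that for each odd index j ∈ {1,3,5}: u' ≠ uⱼ and |u_{j−1} − uⱼ| = |u_{j+1} − uⱼ| = |u' − uⱼ| (the points u_{j−1}, u_{j+1}, u' are equidistant from uⱼ). Then all six distances |vⱼ − v'| (j = 1,…,6) are equal, i.e. v₁,…,v₆ lie on a circle centered at v'. -/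
lemma norm_sub_eq_of_similarity {K : Type*} [NormedDivisionRing K] {u u' w v v' z : K}
    (h : (u - w) * (z - v') = (u' - u) * (v' - v)) (hw : ‖w - u‖ = ‖u' - u‖) (hu : u' ≠ u) :
    ‖v - v'‖ = ‖z - v'‖ := by
  have hnorm := congrArg norm h
  rw [norm_mul, norm_mul, norm_sub_rev u w, hw, norm_sub_rev v' v] at hnorm
  exact (mul_left_cancel₀ (norm_ne_zero_iff.2 (sub_ne_zero.2 hu)) hnorm).symm

theorem fgh_circularity_general
    (u' v' u₁ u₂ u₃ u₄ u₅ u₆ v₁ v₂ v₃ v₄ v₅ v₆ : ℂ)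
    (h1 : (u₁ - u₂) * (v₂ - v') = (u' - u₁) * (v' - v₁))
    (h2 : (u₃ - u₂) * (v₂ - v') = (u' - u₃) * (v' - v₃))
    (h3 : (u₃ - u₄) * (v₄ - v') = (u' - u₃) * (v' - v₃))
    (h4 : (u₅ - u₄) * (v₄ - v') = (u' - u₅) * (v' - v₅))
    (h5 : (u₅ - u₆) * (v₆ - v') = (u' - u₅) * (v' - v₅))
    (hu1 : u' ≠ u₁) (hu3 : u' ≠ u₃) (hu5 : u' ≠ u₅)
    (heq1b : ‖u₂ - u₁‖ = ‖u' - u₁‖)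
    (heq3a : ‖u₂ - u₃‖ = ‖u₄ - u₃‖)
    (heq3b : ‖u₄ - u₃‖ = ‖u' - u₃‖)
    (heq5a : ‖u₄ - u₅‖ = ‖u₆ - u₅‖)
    (heq5b : ‖u₆ - u₅‖ = ‖u' - u₅‖) :
    ‖v₁ - v'‖ = ‖v₂ - v'‖ ∧
    ‖v₂ - v'‖ = ‖v₃ - v'‖ ∧
    ‖v₃ - v'‖ = ‖v₄ - v'‖ ∧
    ‖v₄ - v'‖ = ‖v₅ - v'‖ ∧
    ‖v₅ - v'‖ = ‖v₆ - v'‖ :=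
  ⟨norm_sub_eq_of_similarity h1 heq1b hu1,
    (norm_sub_eq_of_similarity h2 (heq3a.trans heq3b) hu3).symm,
    norm_sub_eq_of_similarity h3 heq3b hu3,
    (norm_sub_eq_of_similarity h4 (heq5a.trans heq5b) hu5).symm,
    norm_sub_eq_of_similarity h5 heq5b hu5⟩

/-- If in the fgh-system the odd-indexed neighbors of a vertex in the
`u`-lattice are centers of circles through the adjacent even-indexed points
and through `u'`, then the six `v`-values of the surrounding hexagon lie on a
circle centered at `v'`. -/
theorem fgh_circularity
    (u' v' u₁ u₂ u₃ u₄ u₅ u₆ v₁ v₂ v₃ v₄ v₅ v₆ : ℂ)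
    (h1 : (u₁ - u₂) * (v₂ - v') = (u' - u₁) * (v' - v₁))
    (h2 : (u₃ - u₂) * (v₂ - v') = (u' - u₃) * (v' - v₃))
    (h3 : (u₃ - u₄) * (v₄ - v') = (u' - u₃) * (v' - v₃))
    (h4 : (u₅ - u₄) * (v₄ - v') = (u' - u₅) * (v' - v₅))
    (h5 : (u₅ - u₆) * (v₆ - v') = (u' - u₅) * (v' - v₅))
    (h6 : (u₁ - u₆) * (v₆ - v') = (u' - u₁) * (v' - v₁))
    (hu1 : u' ≠ u₁) (hu3 : u' ≠ u₃) (hu5 : u' ≠ u₅)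
    (heq1a : ‖u₆ - u₁‖ = ‖u₂ - u₁‖)
    (heq1b : ‖u₂ - u₁‖ = ‖u' - u₁‖)
    (heq3a : ‖u₂ - u₃‖ = ‖u₄ - u₃‖)
    (heq3b : ‖u₄ - u₃‖ = ‖u' - u₃‖)
    (heq5a : ‖u₄ - u₅‖ = ‖u₆ - u₅‖)
    (heq5b : ‖u₆ - u₅‖ = ‖u' - u₅‖) :
    ‖v₁ - v'‖ = ‖v₂ - v'‖ ∧
    ‖v₂ - v'‖ = ‖v₃ - v'‖ ∧
    ‖v₃ - v'‖ = ‖v₄ - v'‖ ∧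
    ‖v₄ - v'‖ = ‖v₅ - v'‖ ∧
    ‖v₅ - v'‖ = ‖v₆ - v'‖ :=
  fgh_circularity_general u' v' u₁ u₂ u₃ u₄ u₅ u₆ v₁ v₂ v₃ v₄ v₅ v₆ h1 h2 h3 h4 h5 hu1 hu3 hu5 heq1b
    heq3a heq3b heq5a heq5b
end

section
/- Let f₀,f₁,f₂,f₃,f₄,f₅ ∈ ℂ satisfy (f₀+f₁)(f₂+f₃)(f₄+f₅) = (f₁+f₂)(f₃+f₄)(f₅+f₀), and assume f₀ ≠ f₂, f₁ ≠ f₃, f₂ ≠ f₄, f₃ ≠ f₅. Then f₀f₃(f₁+f₂)/((f₀−f₂)(f₁−f₃)) + f₂f₅(f₃+f₄)/((f₂−f₄)(f₃−f₅)) + f₄f₁(f₂+f₃)/((f₂−f₄)(f₁−f₃)) = 0. -/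
/-- The isomonodromic constraint for the field `u` is well defined,
independently of the representative of a vertex. -/
theorem constraint_well_defined
    (f₀ f₁ f₂ f₃ f₄ f₅ : ℂ)
    (hMR : (f₀ + f₁) * (f₂ + f₃) * (f₄ + f₅) = (f₁ + f₂) * (f₃ + f₄) * (f₅ + f₀))
    (h02 : f₀ ≠ f₂) (h13 : f₁ ≠ f₃) (h24 : f₂ ≠ f₄) (h35 : f₃ ≠ f₅) :
    f₀ * f₃ * (f₁ + f₂) / ((f₀ - f₂) * (f₁ - f₃))
      + f₂ * f₅ * (f₃ + f₄) / ((f₂ - f₄) * (f₃ - f₅))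
      + f₄ * f₁ * (f₂ + f₃) / ((f₂ - f₄) * (f₁ - f₃)) = 0 := by
  have h02' : f₀ - f₂ ≠ 0 := sub_ne_zero.mpr h02
  have h13' : f₁ - f₃ ≠ 0 := sub_ne_zero.mpr h13
  have h24' : f₂ - f₄ ≠ 0 := sub_ne_zero.mpr h24
  have h35' : f₃ - f₅ ≠ 0 := sub_ne_zero.mpr h35
  have hD1 : (f₀ - f₂) * (f₁ - f₃) ≠ 0 := mul_ne_zero h02' h13'
  have hD2 : (f₂ - f₄) * (f₃ - f₅) ≠ 0 := mul_ne_zero h24' h35'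
  have hD3 : (f₂ - f₄) * (f₁ - f₃) ≠ 0 := mul_ne_zero h24' h13'
  rw [div_add_div _ _ hD1 hD2, div_add_div _ _ (mul_ne_zero hD1 hD2) hD3,
    div_eq_zero_iff]
  left
  linear_combination (-(f₂ - f₄) * (f₁ - f₃) * f₂ * f₃) * hMR
end

section
/- Let f₀,f₁,f₂,f₃,f₄,f₅ ∈ ℂ satisfy (f₀+f₁)(f₂+f₃)(f₄+f₅) = (f₁+f₂)(f₃+f₄)(f₅+f₀), and assume f₀ ≠ f₂, f₁ ≠ f₃, f₂ ≠ f₄, f₃ ≠ f₅. Then (f₁+f₂)/((f₀−f₂)(f₁−f₃)) + (f₃+f₄)/((f₂−f₄)(f₃−f₅)) + (f₂+f₃)/((f₂−f₄)(f₁−f₃)) = 0. -/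
/-! Over the common denominator `(f₀ - f₂)(f₁ - f₃)(f₂ - f₄)(f₃ - f₅)` the numerator of the sum is,
identically, the difference of the two sides of the multi-ratio relation. -/

theorem entry21_numerator_eq_multiRatio_defect {R : Type*} [CommRing R] (f₀ f₁ f₂ f₃ f₄ f₅ : R) :
    (f₁ + f₂) * ((f₂ - f₄) * (f₃ - f₅)) + (f₃ + f₄) * ((f₀ - f₂) * (f₁ - f₃))
      + (f₂ + f₃) * ((f₀ - f₂) * (f₃ - f₅))
      = (f₁ + f₂) * (f₃ + f₄) * (f₅ + f₀) - (f₀ + f₁) * (f₂ + f₃) * (f₄ + f₅) := by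
  ring

/-- Entry 21 of the projector identity `P₀ + P₂ + P₄ = I`. -/
theorem projector_identity_entry21
    (f₀ f₁ f₂ f₃ f₄ f₅ : ℂ)
    (hMR : (f₀ + f₁) * (f₂ + f₃) * (f₄ + f₅) = (f₁ + f₂) * (f₃ + f₄) * (f₅ + f₀))
    (h02 : f₀ ≠ f₂) (h13 : f₁ ≠ f₃) (h24 : f₂ ≠ f₄) (h35 : f₃ ≠ f₅) :
    (f₁ + f₂) / ((f₀ - f₂) * (f₁ - f₃))
      + (f₃ + f₄) / ((f₂ - f₄) * (f₃ - f₅))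
      + (f₂ + f₃) / ((f₂ - f₄) * (f₁ - f₃)) = 0 := by
  have h02' : f₀ - f₂ ≠ 0 := sub_ne_zero.mpr h02
  have h13' : f₁ - f₃ ≠ 0 := sub_ne_zero.mpr h13
  have h24' : f₂ - f₄ ≠ 0 := sub_ne_zero.mpr h24
  have h35' : f₃ - f₅ ≠ 0 := sub_ne_zero.mpr h35
  have numerator_eq_zero := entry21_numerator_eq_multiRatio_defect f₀ f₁ f₂ f₃ f₄ f₅
  rw [hMR, sub_self] at numerator_eq_zero
  field_simp
  linear_combination numerator_eq_zero
end

section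
/- Let u, v : ℤ² → ℂ satisfy relations (A) and (B) at every (k,ℓ) ∈ ℤ². Then there exists a function a : ℤ² → ℂ such that for all (k,ℓ) ∈ ℤ²: a(k+1,ℓ) − a(k,ℓ) = v(k,ℓ)·(u(k+1,ℓ) − u(k,ℓ)), a(k,ℓ+1) − a(k,ℓ) = v(k,ℓ)·(u(k,ℓ+1) − u(k,ℓ)), and a(k,ℓ) − a(k+1,ℓ+1) = v(k+1,ℓ+1)·(u(k,ℓ) − u(k+1,ℓ+1)); i.e., the discrete one-form whose value on each positively oriented edge (z₁,z₂) is v(z₁)·(u(z₂) − u(z₁)) is exact on the triangular lattice. -/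
open Finset

section Potential

variable {M : Type*} [AddCommGroup M]

noncomputable def intPrimitive (f : ℤ → M) (n : ℤ) : M :=
  ∑ i ∈ Ico 0 n, f i - ∑ i ∈ Ico n 0, f i

@[simp]
lemma intPrimitive_zero (f : ℤ → M) : intPrimitive f 0 = 0 := by
  simp [intPrimitive]

lemma intPrimitive_add_one (f : ℤ → M) (n : ℤ) :
    intPrimitive f (n + 1) = intPrimitive f n + f n := by
  rw [← sub_eq_iff_eq_add']
  rcases le_or_gt 0 n with hn | hn
  · simp [intPrimitive, Ico_eq_empty_of_le, hn, (by omega : (0 : ℤ) ≤ n + 1),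
      ← sum_Ico_add_eq_sum_Ico_add_one hn]
  · rw [intPrimitive, intPrimitive, Ico_eq_empty_of_le (by omega : n + 1 ≤ 0),
      Ico_eq_empty_of_le hn.le, ← insert_Ico_add_one_left_eq_Ico hn,
      sum_insert (by simp)]
    abel

lemma exists_potential_of_square_closed (h w : ℤ → ℤ → M)
    (hclosed : ∀ k l, h k l + w (k + 1) l = w k l + h k (l + 1)) :
    ∃ a : ℤ → ℤ → M, ∀ k l,
      a (k + 1) l - a k l = h k l ∧ a k (l + 1) - a k l = w k l := by
  set W : ℤ → ℤ → M := fun k => intPrimitive (w k)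
  have hW : ∀ k l, W (k + 1) l = W k l + h k l - h k 0 := by
    intro k l
    have hper : Function.Periodic (fun l => W (k + 1) l - W k l - h k l) 1 := by
      intro l
      simp only [W, intPrimitive_add_one, eq_sub_of_add_eq' (hclosed k l).symm]
      abel
    have := hper.int_mul_eq l
    simp only [Int.cast_id, mul_one, W, intPrimitive_zero, sub_self, zero_sub,
      sub_eq_iff_eq_add] at this
    simp only [W, this]
    abel
  refine ⟨fun k l => intPrimitive (fun k => h k 0) k + W k l, fun k l => ⟨?_, ?_⟩⟩
  · simp only [intPrimitive_add_one, hW]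
    abel
  · simp only [W, intPrimitive_add_one]
    abel

lemma exists_potential_of_triangle_closed (h w d : ℤ → ℤ → M)
    (hlower : ∀ k l, h k l + w (k + 1) l + d k l = 0)
    (hupper : ∀ k l, w k l + h k (l + 1) + d k l = 0) :
    ∃ a : ℤ → ℤ → M, ∀ k l, a (k + 1) l - a k l = h k l ∧ a k (l + 1) - a k l = w k l ∧
      a k l - a (k + 1) (l + 1) = d k l := by
  obtain ⟨a, ha⟩ := exists_potential_of_square_closed h w fun k l =>
    (eq_neg_of_add_eq_zero_left (hlower k l)).trans (eq_neg_of_add_eq_zero_left (hupper k l)).symm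
  refine ⟨a, fun k l => ⟨(ha k l).1, (ha k l).2, ?_⟩⟩
  rw [eq_neg_of_add_eq_zero_right (hlower k l), ← (ha k l).1, ← (ha (k + 1) l).2]
  abel

end Potential

namespace FghRelations

variable {u v : ℤ → ℤ → ℂ}

theorem lower_triangle (huv : FghRelations u v) (k l : ℤ) :
    v k l * (u (k + 1) l - u k l) + v (k + 1) l * (u (k + 1) (l + 1) - u (k + 1) l)
      + v (k + 1) (l + 1) * (u k l - u (k + 1) (l + 1)) = 0 := by
  linear_combination (huv k l).1

theorem upper_triangle (huv : FghRelations u v) (k l : ℤ) :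
    v k l * (u k (l + 1) - u k l) + v k (l + 1) * (u (k + 1) (l + 1) - u k (l + 1))
      + v (k + 1) (l + 1) * (u k l - u (k + 1) (l + 1)) = 0 := by
  linear_combination (huv k l).2

end FghRelations

/-- For a solution `(u,v)` of the fgh-system, the discrete one-form whose
value on each positively oriented edge `(z₁, z₂)` is `v(z₁)·(u(z₂) − u(z₁))`
is exact. -/
theorem fgh_one_form_exact
    (u v : ℤ → ℤ → ℂ) (huv : FghRelations u v) :
    ∃ a : ℤ → ℤ → ℂ, ∀ k l : ℤ,
      a (k+1) l - a k l = v k l * (u (k+1) l - u k l) ∧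
      a k (l+1) - a k l = v k l * (u k (l+1) - u k l) ∧
      a k l - a (k+1) (l+1) = v (k+1) (l+1) * (u k l - u (k+1) (l+1)) :=
  exists_potential_of_triangle_closed _ _ _ huv.lower_triangle huv.upper_triangle
end

section
/- Let α ∈ ℝ with 0 < α < 1/2, and let u, v, f, g : ℕ → ℝ be defined by the closed formulas of the context. Then: u(0) = v(0) = 0, u(1) = v(1) = 1, f(0) = g(0) = 1; f(k) > 0 and g(k) > 0 for all k ≥ 0, and u(k) > 0, v(k) > 0 for all k ≥ 1; for all k ≥ 0: u(k+1) = u(k) + f(k) and v(k+1) = v(k) + g(k); and for all k ≥ 1: f(k)·v(k) = u(k)·g(k−1) and k − α·u(k)/f(k−1) − α·v(k)/g(k−1) ≠ 0 with g(k) = α·v(k) / (k − α·u(k)/f(k−1) − α·v(k)/g(k−1)). Thus the closed formulas solve, in the symmetric case β = α with initial data u(1) = v(1) = 1, the recurrence obtained from the isomonodromic constraint on the positive axis. -/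
/-- `Π₁(k) = ∏_{j=1}^{k} (j+2α)/(j−α)`. -/
noncomputable def Pi1 (α : ℝ) (k : ℕ) : ℝ :=
  ∏ j ∈ Finset.range k, (((j : ℝ) + 1) + 2 * α) / (((j : ℝ) + 1) - α)

/-- `Π₂(k) = ∏_{j=1}^{k} (j+α)/(j−2α)`. -/
noncomputable def Pi2 (α : ℝ) (k : ℕ) : ℝ :=
  ∏ j ∈ Finset.range k, (((j : ℝ) + 1) + α) / (((j : ℝ) + 1) - 2 * α)

/-- The axis values of the field `u`: `u(3k) = (2k/(k+2α))·Π₁(k)`,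
`u(3k+1) = ((2k+2α)/(k+2α))·Π₁(k)`, `u(3k+2) = 2·Π₁(k)`. -/
noncomputable def uSeq (α : ℝ) (n : ℕ) : ℝ :=
  if n % 3 = 0 then (2 * ((n / 3 : ℕ) : ℝ) / (((n / 3 : ℕ) : ℝ) + 2 * α)) * Pi1 α (n / 3)
  else if n % 3 = 1 then
    ((2 * ((n / 3 : ℕ) : ℝ) + 2 * α) / (((n / 3 : ℕ) : ℝ) + 2 * α)) * Pi1 α (n / 3)
  else 2 * Pi1 α (n / 3)

/-- The axis values of the field `f`: `f(0) = f(1) = 1` and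
`f(3k−1) = f(3k) = f(3k+1) = (2α/(k+2α))·Π₁(k)` for `k ≥ 1`. -/
noncomputable def fSeq (α : ℝ) (n : ℕ) : ℝ :=
  if n ≤ 1 then 1
  else (2 * α / ((((n + 1) / 3 : ℕ) : ℝ) + 2 * α)) * Pi1 α ((n + 1) / 3)

/-- The axis values of the field `v`: `v(3k) = (k/(k+α))·Π₂(k)`,
`v(3k+1) = Π₂(k)`, and `v(3k−1) = ((k−α)/(k+α))·Π₂(k)` for `k ≥ 1`. -/
noncomputable def vSeq (α : ℝ) (n : ℕ) : ℝ :=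
  if n % 3 = 0 then (((n / 3 : ℕ) : ℝ) / (((n / 3 : ℕ) : ℝ) + α)) * Pi2 α (n / 3)
  else if n % 3 = 1 then Pi2 α (n / 3)
  else (((((n + 1) / 3 : ℕ) : ℝ) - α) / ((((n + 1) / 3 : ℕ) : ℝ) + α))
    * Pi2 α ((n + 1) / 3)

/-- The axis values of the field `g`: `g(0) = 1` and
`g(3k−2) = g(3k−1) = g(3k) = (α/(k+α))·Π₂(k)` for `k ≥ 1`. -/
noncomputable def gSeq (α : ℝ) (n : ℕ) : ℝ :=
  if n = 0 then 1
  else (α / ((((n + 2) / 3 : ℕ) : ℝ) + α)) * Pi2 α ((n + 2) / 3)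

/-!
Each of `u, f, v, g` is given on the residue classes `3q, 3q + 1, 3q + 2` by a rational function
of `q` and `α` times `Π₁(q)` or `Π₂(q)` (or `Π(q + 1)`, which is `Π(q)` times one more factor).
Every claim therefore splits into three identities of rational functions. The key one is the
closed form of the constraint's denominator: it equals `q + 1 - 2α`, `q + 1 - α` and `q + 1` at
`k = 3q + 1, 3q + 2, 3q + 3`, which is positive because `α < 1/2`.
-/

@[elab_as_elim]
theorem Nat.mod_three_cases {P : ℕ → Prop} (three_mul : ∀ q, P (3 * q))
    (three_mul_add_one : ∀ q, P (3 * q + 1)) (three_mul_add_two : ∀ q, P (3 * q + 2)) (n : ℕ) :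
    P n := by
  obtain ⟨q, r, hr, rfl⟩ : ∃ q r, r < 3 ∧ n = 3 * q + r :=
    ⟨n / 3, n % 3, n.mod_lt (by norm_num), (Nat.div_add_mod n 3).symm⟩
  interval_cases r
  exacts [three_mul q, three_mul_add_one q, three_mul_add_two q]

section
variable {α : ℝ}

theorem Pi1_succ (k : ℕ) : Pi1 α (k + 1) = Pi1 α k * ((k + 1 + 2 * α) / (k + 1 - α)) := by
  simp only [Pi1, Finset.prod_range_succ]

theorem Pi2_succ (k : ℕ) : Pi2 α (k + 1) = Pi2 α k * ((k + 1 + α) / (k + 1 - 2 * α)) := by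
  simp only [Pi2, Finset.prod_range_succ]

theorem Pi1_pos (h₀ : -1 < 2 * α) (h₁ : α < 1) (k : ℕ) : 0 < Pi1 α k :=
  Finset.prod_pos fun j _ => div_pos (by linarith [j.cast_nonneg (α := ℝ)])
    (by linarith [j.cast_nonneg (α := ℝ)])

theorem Pi2_pos (h₀ : -1 < α) (h₁ : 2 * α < 1) (k : ℕ) : 0 < Pi2 α k :=
  Finset.prod_pos fun j _ => div_pos (by linarith [j.cast_nonneg (α := ℝ)])
    (by linarith [j.cast_nonneg (α := ℝ)])

theorem uSeq_three_mul (q : ℕ) : uSeq α (3 * q) = 2 * q / (q + 2 * α) * Pi1 α q := by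
  simp [uSeq]

theorem uSeq_three_mul_add_one (q : ℕ) :
    uSeq α (3 * q + 1) = (2 * q + 2 * α) / (q + 2 * α) * Pi1 α q := by
  simp [uSeq, Nat.mul_add_div]

theorem uSeq_three_mul_add_two (q : ℕ) : uSeq α (3 * q + 2) = 2 * Pi1 α q := by
  simp [uSeq, Nat.mul_add_div]

theorem fSeq_three_mul (hα : α ≠ 0) (q : ℕ) : fSeq α (3 * q) = 2 * α / (q + 2 * α) * Pi1 α q := by
  rcases q with _ | q
  · simp [fSeq, Pi1, hα]
  · simp [fSeq, Nat.mul_add_div, add_assoc, show ¬3 * (q + 1) ≤ 1 by omega]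

theorem fSeq_three_mul_add_one (hα : α ≠ 0) (q : ℕ) :
    fSeq α (3 * q + 1) = 2 * α / (q + 2 * α) * Pi1 α q := by
  rcases q with _ | q
  · simp [fSeq, Pi1, hα]
  · simp [fSeq, Nat.mul_add_div, add_assoc]

theorem fSeq_three_mul_add_two (q : ℕ) :
    fSeq α (3 * q + 2) = 2 * α / (q + 1 + 2 * α) * Pi1 α (q + 1) := by
  simp [fSeq, add_assoc]

theorem vSeq_three_mul (q : ℕ) : vSeq α (3 * q) = q / (q + α) * Pi2 α q := by
  simp [vSeq]

theorem vSeq_three_mul_add_one (q : ℕ) : vSeq α (3 * q + 1) = Pi2 α q := by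
  simp [vSeq, Nat.mul_add_div]

theorem vSeq_three_mul_add_two (q : ℕ) :
    vSeq α (3 * q + 2) = (q + 1 - α) / (q + 1 + α) * Pi2 α (q + 1) := by
  simp [vSeq, add_assoc]

theorem gSeq_three_mul (hα : α ≠ 0) (q : ℕ) : gSeq α (3 * q) = α / (q + α) * Pi2 α q := by
  rcases q with _ | q
  · simp [gSeq, Pi2, hα]
  · simp [gSeq, Nat.mul_add_div, add_assoc]

theorem gSeq_three_mul_add_one (q : ℕ) :
    gSeq α (3 * q + 1) = α / (q + 1 + α) * Pi2 α (q + 1) := by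
  simp [gSeq, add_assoc]

theorem gSeq_three_mul_add_two (q : ℕ) :
    gSeq α (3 * q + 2) = α / (q + 1 + α) * Pi2 α (q + 1) := by
  simp [gSeq, add_assoc, Nat.mul_add_div]

theorem fSeq_pos (hα0 : 0 < α) (hα : α < 1 / 2) (k : ℕ) : 0 < fSeq α k := by
  have hP := Pi1_pos (α := α) (by linarith) (by linarith)
  induction k using Nat.mod_three_cases with
  | three_mul q =>
    rw [fSeq_three_mul hα0.ne']; exact mul_pos (by positivity) (hP q)
  | three_mul_add_one q =>
    rw [fSeq_three_mul_add_one hα0.ne']; exact mul_pos (by positivity) (hP q)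
  | three_mul_add_two q =>
    rw [fSeq_three_mul_add_two]; exact mul_pos (by positivity) (hP (q + 1))

theorem gSeq_pos (hα0 : 0 < α) (hα : α < 1 / 2) (k : ℕ) : 0 < gSeq α k := by
  have hP := Pi2_pos (α := α) (by linarith) (by linarith)
  induction k using Nat.mod_three_cases with
  | three_mul q => rw [gSeq_three_mul hα0.ne']; exact mul_pos (by positivity) (hP q)
  | three_mul_add_one q => rw [gSeq_three_mul_add_one]; exact mul_pos (by positivity) (hP (q + 1))
  | three_mul_add_two q => rw [gSeq_three_mul_add_two]; exact mul_pos (by positivity) (hP (q + 1))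

theorem uSeq_pos (hα0 : 0 < α) (hα : α < 1 / 2) {k : ℕ} (hk : 1 ≤ k) : 0 < uSeq α k := by
  have hP := Pi1_pos (α := α) (by linarith) (by linarith)
  induction k using Nat.mod_three_cases with
  | three_mul q =>
    have hq : (0 : ℝ) < q := by exact_mod_cast (by omega : 0 < q)
    rw [uSeq_three_mul]; exact mul_pos (by positivity) (hP q)
  | three_mul_add_one q => rw [uSeq_three_mul_add_one]; exact mul_pos (by positivity) (hP q)
  | three_mul_add_two q => rw [uSeq_three_mul_add_two]; exact mul_pos (by positivity) (hP q)

theorem vSeq_pos (hα0 : 0 < α) (hα : α < 1 / 2) {k : ℕ} (hk : 1 ≤ k) : 0 < vSeq α k := by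
  have hP := Pi2_pos (α := α) (by linarith) (by linarith)
  induction k using Nat.mod_three_cases with
  | three_mul q =>
    have hq : (0 : ℝ) < q := by exact_mod_cast (by omega : 0 < q)
    rw [vSeq_three_mul]; exact mul_pos (by positivity) (hP q)
  | three_mul_add_one q => rw [vSeq_three_mul_add_one]; exact hP q
  | three_mul_add_two q =>
    have hq : α < q + 1 := by linarith [q.cast_nonneg (α := ℝ)]
    rw [vSeq_three_mul_add_two]; exact mul_pos (div_pos (by linarith) (by positivity)) (hP (q + 1))

theorem uSeq_succ (hα0 : 0 < α) (hα : α < 1 / 2) (k : ℕ) :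
    uSeq α (k + 1) = uSeq α k + fSeq α k := by
  have hq (q : ℕ) : (0 : ℝ) ≤ q := q.cast_nonneg
  induction k using Nat.mod_three_cases with
  | three_mul q =>
    rw [uSeq_three_mul_add_one, uSeq_three_mul, fSeq_three_mul hα0.ne', ← add_mul, ← add_div]
  | three_mul_add_one q =>
    have : (q : ℝ) + 2 * α ≠ 0 := by positivity
    rw [uSeq_three_mul_add_two, uSeq_three_mul_add_one, fSeq_three_mul_add_one hα0.ne']
    field_simp; ring
  | three_mul_add_two q =>
    have : (q : ℝ) + 1 - α ≠ 0 := by linarith [hq q]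
    rw [show 3 * q + 2 + 1 = 3 * (q + 1) by ring, uSeq_three_mul, uSeq_three_mul_add_two,
      fSeq_three_mul_add_two, Pi1_succ]
    push_cast
    field_simp; ring

theorem vSeq_succ (hα0 : 0 < α) (hα : α < 1 / 2) (k : ℕ) :
    vSeq α (k + 1) = vSeq α k + gSeq α k := by
  have hq (q : ℕ) : (0 : ℝ) ≤ q := q.cast_nonneg
  induction k using Nat.mod_three_cases with
  | three_mul q =>
    have : (q : ℝ) + α ≠ 0 := by positivity
    rw [vSeq_three_mul_add_one, vSeq_three_mul, gSeq_three_mul hα0.ne']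
    field_simp
  | three_mul_add_one q =>
    have : (q : ℝ) + 1 + α ≠ 0 := by positivity
    -- in the normal form `field_simp` looks for
    have : (q : ℝ) + 1 - α * 2 ≠ 0 := by linarith [hq q]
    rw [vSeq_three_mul_add_two, vSeq_three_mul_add_one, gSeq_three_mul_add_one, Pi2_succ]
    field_simp; ring
  | three_mul_add_two q =>
    rw [show 3 * q + 2 + 1 = 3 * (q + 1) by ring, vSeq_three_mul, vSeq_three_mul_add_two,
      gSeq_three_mul_add_two, ← add_mul, ← add_div]
    rw [sub_add_cancel]; push_cast; rfl

theorem fSeq_succ_mul_vSeq_succ (hα0 : 0 < α) (hα : α < 1 / 2) (k : ℕ) :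
    fSeq α (k + 1) * vSeq α (k + 1) = uSeq α (k + 1) * gSeq α k := by
  have hq (q : ℕ) : (0 : ℝ) ≤ q := q.cast_nonneg
  induction k using Nat.mod_three_cases with
  | three_mul q =>
    rw [fSeq_three_mul_add_one hα0.ne', vSeq_three_mul_add_one, uSeq_three_mul_add_one,
      gSeq_three_mul hα0.ne']
    have : (q : ℝ) + α ≠ 0 := by positivity
    field_simp
  | three_mul_add_one q =>
    rw [fSeq_three_mul_add_two, vSeq_three_mul_add_two, uSeq_three_mul_add_two,
      gSeq_three_mul_add_one, Pi1_succ]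
    have : (q : ℝ) + 1 - α ≠ 0 := by linarith [hq q]
    field_simp
  | three_mul_add_two q =>
    rw [show 3 * q + 2 + 1 = 3 * (q + 1) by ring, fSeq_three_mul hα0.ne', vSeq_three_mul,
      uSeq_three_mul, gSeq_three_mul_add_two]
    push_cast
    field_simp

noncomputable def recurrenceDenom (α : ℝ) (k : ℕ) : ℝ :=
  k - α * uSeq α k / fSeq α (k - 1) - α * vSeq α k / gSeq α (k - 1)

theorem recurrenceDenom_succ (k : ℕ) : recurrenceDenom α (k + 1) =
    k + 1 - α * uSeq α (k + 1) / fSeq α k - α * vSeq α (k + 1) / gSeq α k := by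
  simp [recurrenceDenom]

theorem recurrenceDenom_three_mul_add_one (hα0 : 0 < α) (hα : α < 1 / 2) (q : ℕ) :
    recurrenceDenom α (3 * q + 1) = q + 1 - 2 * α := by
  have := Pi1_pos (α := α) (by linarith) (by linarith) q
  have := Pi2_pos (α := α) (by linarith) (by linarith) q
  have : (q : ℝ) + α ≠ 0 := by positivity
  rw [recurrenceDenom_succ, uSeq_three_mul_add_one, fSeq_three_mul hα0.ne',
    vSeq_three_mul_add_one, gSeq_three_mul hα0.ne']
  push_cast
  field_simp
  ring

theorem recurrenceDenom_three_mul_add_two (hα0 : 0 < α) (hα : α < 1 / 2) (q : ℕ) :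
    recurrenceDenom α (3 * q + 2) = q + 1 - α := by
  have := Pi1_pos (α := α) (by linarith) (by linarith) q
  have := Pi2_pos (α := α) (by linarith) (by linarith) (q + 1)
  have : (q : ℝ) + 1 + α ≠ 0 := by positivity
  rw [recurrenceDenom_succ, uSeq_three_mul_add_two, fSeq_three_mul_add_one hα0.ne',
    vSeq_three_mul_add_two, gSeq_three_mul_add_one]
  push_cast
  field_simp
  ring

theorem recurrenceDenom_three_mul_add_three (hα0 : 0 < α) (hα : α < 1 / 2) (q : ℕ) :
    recurrenceDenom α (3 * q + 3) = q + 1 := by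
  have := Pi1_pos (α := α) (by linarith) (by linarith) (q + 1)
  have := Pi2_pos (α := α) (by linarith) (by linarith) (q + 1)
  have : (q : ℝ) + 1 + α ≠ 0 := by positivity
  rw [recurrenceDenom_succ, show 3 * q + 2 + 1 = 3 * (q + 1) by ring, uSeq_three_mul,
    fSeq_three_mul_add_two, vSeq_three_mul, gSeq_three_mul_add_two]
  push_cast
  field_simp
  ring

theorem recurrenceDenom_pos (hα0 : 0 < α) (hα : α < 1 / 2) {k : ℕ} (hk : 1 ≤ k) :
    0 < recurrenceDenom α k := by
  obtain ⟨k, rfl⟩ := Nat.exists_eq_add_of_le' hk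
  have hq (q : ℕ) : (0 : ℝ) ≤ q := q.cast_nonneg
  induction k using Nat.mod_three_cases with
  | three_mul q => rw [recurrenceDenom_three_mul_add_one hα0 hα]; linarith [hq q]
  | three_mul_add_one q => rw [recurrenceDenom_three_mul_add_two hα0 hα]; linarith [hq q]
  | three_mul_add_two q => rw [recurrenceDenom_three_mul_add_three hα0 hα]; linarith [hq q]

theorem gSeq_eq_div_recurrenceDenom (hα0 : 0 < α) (hα : α < 1 / 2) {k : ℕ} (hk : 1 ≤ k) :
    gSeq α k = α * vSeq α k / recurrenceDenom α k := by
  obtain ⟨k, rfl⟩ := Nat.exists_eq_add_of_le' hk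
  have hq (q : ℕ) : (0 : ℝ) ≤ q := q.cast_nonneg
  induction k using Nat.mod_three_cases with
  | three_mul q =>
    have : (q : ℝ) + 1 + α ≠ 0 := by positivity
    have : (q : ℝ) + 1 - α * 2 ≠ 0 := by linarith [hq q]
    rw [recurrenceDenom_three_mul_add_one hα0 hα, gSeq_three_mul_add_one, vSeq_three_mul_add_one,
      Pi2_succ]
    field_simp
  | three_mul_add_one q =>
    have : (q : ℝ) + 1 - α ≠ 0 := by linarith [hq q]
    rw [recurrenceDenom_three_mul_add_two hα0 hα, gSeq_three_mul_add_two, vSeq_three_mul_add_two]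
    field_simp
  | three_mul_add_two q =>
    rw [recurrenceDenom_three_mul_add_three hα0 hα, show 3 * q + 2 + 1 = 3 * (q + 1) by ring,
      gSeq_three_mul hα0.ne', vSeq_three_mul]
    push_cast
    field_simp

end

/-- The closed formulas solve, in the symmetric case `β = α` with initial
data `u(1) = v(1) = 1`, the recurrence obtained from the isomonodromic
constraint on the positive axis. -/
theorem closed_formulas_solve_recurrence
    (α : ℝ) (hα0 : 0 < α) (hα : α < 1 / 2) :
    uSeq α 0 = 0 ∧ vSeq α 0 = 0 ∧ uSeq α 1 = 1 ∧ vSeq α 1 = 1 ∧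
    fSeq α 0 = 1 ∧ gSeq α 0 = 1 ∧
    (∀ k : ℕ, 0 < fSeq α k ∧ 0 < gSeq α k) ∧
    (∀ k : ℕ, 1 ≤ k → 0 < uSeq α k ∧ 0 < vSeq α k) ∧
    (∀ k : ℕ, uSeq α (k + 1) = uSeq α k + fSeq α k ∧
      vSeq α (k + 1) = vSeq α k + gSeq α k) ∧
    (∀ k : ℕ, 1 ≤ k →
      fSeq α k * vSeq α k = uSeq α k * gSeq α (k - 1) ∧
      (k : ℝ) - α * uSeq α k / fSeq α (k - 1) - α * vSeq α k / gSeq α (k - 1) ≠ 0 ∧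
      gSeq α k = α * vSeq α k /
        ((k : ℝ) - α * uSeq α k / fSeq α (k - 1) - α * vSeq α k / gSeq α (k - 1))) := by
  refine ⟨by simp [uSeq], by simp [vSeq], by simp [uSeq, Pi1, hα0.ne'], by simp [vSeq, Pi2],
    by simp [fSeq], by simp [gSeq], fun k => ⟨fSeq_pos hα0 hα k, gSeq_pos hα0 hα k⟩,
    fun k hk => ⟨uSeq_pos hα0 hα hk, vSeq_pos hα0 hα hk⟩,
    fun k => ⟨uSeq_succ hα0 hα k, vSeq_succ hα0 hα k⟩, fun k hk => ?_⟩
  obtain ⟨k, rfl⟩ := Nat.exists_eq_add_of_le' hk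
  exact ⟨fSeq_succ_mul_vSeq_succ hα0 hα k, (recurrenceDenom_pos hα0 hα hk).ne',
    gSeq_eq_div_recurrenceDenom hα0 hα hk⟩
end

section
/- For i = 1,2,3,4 let fᵢ, gᵢ, hᵢ ∈ ℂ with fᵢ·gᵢ·hᵢ = 1, satisfying f₁+f₂ = f₃+f₄, g₁+g₂ = g₃+g₄, h₁+h₂ = h₃+h₄, f₁g₂ = f₃g₄, g₁h₂ = g₃h₄, h₁f₂ = h₃f₄, and g₁ ≠ g₃. Then f₁g₁ + f₂g₁ + f₂g₂ = 0. -/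
/-- The entry 13 of `(L₁L₂)⁻¹` vanishes: the algebraic identity needed to
extend a flat connection of the fgh-system across the diagonal of an
elementary square. -/
theorem entry13_vanishes
    (f₁ f₂ f₃ f₄ g₁ g₂ g₃ g₄ h₁ h₂ h₃ h₄ : ℂ)
    (h1 : f₁ * g₁ * h₁ = 1) (h2 : f₂ * g₂ * h₂ = 1)
    (h3 : f₃ * g₃ * h₃ = 1) (h4 : f₄ * g₄ * h₄ = 1)
    (hf : f₁ + f₂ = f₃ + f₄) (hg : g₁ + g₂ = g₃ + g₄) (hh : h₁ + h₂ = h₃ + h₄)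
    (hfg : f₁ * g₂ = f₃ * g₄) (hgh : g₁ * h₂ = g₃ * h₄) (hhf : h₁ * f₂ = h₃ * f₄)
    (hg13 : g₁ ≠ g₃) :
    f₁ * g₁ + f₂ * g₁ + f₂ * g₂ = 0 := by
  have hB : g₁ * (f₄ * g₄) = g₃ * (f₂ * g₂) := by
    linear_combination (f₂*g₂*f₄*g₄) * hgh - (g₁*f₄*g₄) * h2 + (g₃*f₂*g₂) * h4
  have hg42 : g₄ - g₂ ≠ 0 := by
    intro h
    exact hg13 (by linear_combination hg + h)
  have key : (g₄ - g₂) * (f₁ * g₁ + f₂ * g₁ + f₂ * g₂) = 0 := by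
    linear_combination hB - f₂*g₂*hg + g₁*g₄*hf - g₁*hfg
  rcases mul_eq_zero.mp key with h | h
  · exact absurd h hg42
  · exact h
end
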